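/- arXiv:2106.09850 — 4 statements merged into one kernel-verified Lean document; each statement's English description precedes it below -/
import Mathlib

section
/- Substitution lemma for valuations: let ⟨𝔄, v⟩ be an S-interpretation for QLET_F, let A be a formula of the diagram language with at most one free variable x, and let c₁, c₂ be constants of the diagram language interpreted as the same element of the domain. Then v(A(c₁/x)) = v(A(c₂/x)). -/
set_option autoImplicit true
set_option relaxedAutoImplicit true

namespace QLETF

/-- Formulas of a first-order language with a classicality operator `cl` (∘),
a non-classicality operator `ncl` (•), identity `eq`, over a type `K` of
individual constants.  Terms are `ℕ ⊕ K`: `Sum.inl n` is the variable `vₙ`,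
`Sum.inr c` is the constant `c`.  Predicate letters are indexed by `ℕ`. -/
inductive Fm (K : Type) : Type where
  | pred : ℕ → List (ℕ ⊕ K) → Fm K
  | eq   : (ℕ ⊕ K) → (ℕ ⊕ K) → Fm K
  | neg  : Fm K → Fm K
  | conj : Fm K → Fm K → Fm K
  | disj : Fm K → Fm K → Fm K
  | cl   : Fm K → Fm K
  | ncl  : Fm K → Fm K
  | all  : ℕ → Fm K → Fm K
  | ex   : ℕ → Fm K → Fm K

variable {K K' : Type}

/-- Substitution on terms: replace the variable `x` by the term `t`. -/
def substT (x : ℕ) (t : ℕ ⊕ K) : (ℕ ⊕ K) → (ℕ ⊕ K)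
  | .inl y => if y = x then t else .inl y
  | .inr c => .inr c

/-- `subst x t A` replaces every free occurrence of the variable `x` in `A` by `t`. -/
def subst (x : ℕ) (t : ℕ ⊕ K) : Fm K → Fm K
  | .pred n ts => .pred n (ts.map (substT x t))
  | .eq a b    => .eq (substT x t a) (substT x t b)
  | .neg A     => .neg (subst x t A)
  | .conj A B  => .conj (subst x t A) (subst x t B)
  | .disj A B  => .disj (subst x t A) (subst x t B)
  | .cl A      => .cl (subst x t A)
  | .ncl A     => .ncl (subst x t A)
  | .all y A   => if y = x then .all y A else .all y (subst x t A)
  | .ex y A    => if y = x then .ex y A else .ex y (subst x t A)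

/-- The set of free variables of a formula. -/
def fv : Fm K → Set ℕ
  | .pred _ ts => {y | Sum.inl y ∈ ts}
  | .eq a b    => {y | a = Sum.inl y ∨ b = Sum.inl y}
  | .neg A     => fv A
  | .conj A B  => fv A ∪ fv B
  | .disj A B  => fv A ∪ fv B
  | .cl A      => fv A
  | .ncl A     => fv A
  | .all y A   => fv A \ {y}
  | .ex y A    => fv A \ {y}

/-- The set of all (free or bound) variables occurring in a formula. -/
def vars : Fm K → Set ℕ
  | .pred _ ts => {y | Sum.inl y ∈ ts}
  | .eq a b    => {y | a = Sum.inl y ∨ b = Sum.inl y}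
  | .neg A     => vars A
  | .conj A B  => vars A ∪ vars B
  | .disj A B  => vars A ∪ vars B
  | .cl A      => vars A
  | .ncl A     => vars A
  | .all y A   => insert y (vars A)
  | .ex y A    => insert y (vars A)

/-- The constant `c` occurs in the formula. -/
def cOcc (c : K) : Fm K → Prop
  | .pred _ ts => Sum.inr c ∈ ts
  | .eq a b    => a = Sum.inr c ∨ b = Sum.inr c
  | .neg A     => cOcc c A
  | .conj A B  => cOcc c A ∨ cOcc c B
  | .disj A B  => cOcc c A ∨ cOcc c B
  | .cl A      => cOcc c A
  | .ncl A     => cOcc c A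
  | .all _ A   => cOcc c A
  | .ex _ A    => cOcc c A

/-- A sentence is a formula with no free variables. -/
def Closed (A : Fm K) : Prop := fv A = ∅

/-- The formula contains no occurrence of the operators ∘ and •. -/
def clFree : Fm K → Prop
  | .pred _ _ => True
  | .eq _ _   => True
  | .neg A    => clFree A
  | .conj A B => clFree A ∧ clFree B
  | .disj A B => clFree A ∧ clFree B
  | .cl _     => False
  | .ncl _    => False
  | .all _ A  => clFree A
  | .ex _ A   => clFree A

/-- Alphabetic variance: the least equivalence relation, compatible with the
connectives, that allows renaming a bound variable to a fresh one. -/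
inductive Alpha : Fm K → Fm K → Prop
  | refl (A : Fm K) : Alpha A A
  | symm : Alpha A B → Alpha B A
  | trans : Alpha A B → Alpha B C → Alpha A C
  | negC : Alpha A B → Alpha (.neg A) (.neg B)
  | conjC : Alpha A A' → Alpha B B' → Alpha (.conj A B) (.conj A' B')
  | disjC : Alpha A A' → Alpha B B' → Alpha (.disj A B) (.disj A' B')
  | clC : Alpha A B → Alpha (.cl A) (.cl B)
  | nclC : Alpha A B → Alpha (.ncl A) (.ncl B)
  | allC : Alpha A B → Alpha (.all x A) (.all x B)
  | exC : Alpha A B → Alpha (.ex x A) (.ex x B)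
  | allR (x y : ℕ) (A : Fm K) : y ∉ vars A →
      Alpha (.all x A) (.all y (subst x (Sum.inl y) A))
  | exR (x y : ℕ) (A : Fm K) : y ∉ vars A →
      Alpha (.ex x A) (.ex y (subst x (Sum.inl y) A))

/-- The natural deduction system QLET_F (sequent-style: `Deriv Γ A` means that
`A` is derivable from the set of hypotheses `Γ`). -/
inductive Deriv : Set (Fm K) → Fm K → Prop
  | hyp : A ∈ Γ → Deriv Γ A
  | andI : Deriv Γ A → Deriv Γ B → Deriv Γ (.conj A B)
  | andE1 : Deriv Γ (.conj A B) → Deriv Γ A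
  | andE2 : Deriv Γ (.conj A B) → Deriv Γ B
  | orI1 : Deriv Γ A → Deriv Γ (.disj A B)
  | orI2 : Deriv Γ B → Deriv Γ (.disj A B)
  | orE : Deriv Γ (.disj A B) → Deriv (insert A Γ) C → Deriv (insert B Γ) C → Deriv Γ C
  | negAndI1 : Deriv Γ (.neg A) → Deriv Γ (.neg (.conj A B))
  | negAndI2 : Deriv Γ (.neg B) → Deriv Γ (.neg (.conj A B))
  | negAndE : Deriv Γ (.neg (.conj A B)) → Deriv (insert (.neg A) Γ) C →
      Deriv (insert (.neg B) Γ) C → Deriv Γ C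
  | negOrI : Deriv Γ (.neg A) → Deriv Γ (.neg B) → Deriv Γ (.neg (.disj A B))
  | negOrE1 : Deriv Γ (.neg (.disj A B)) → Deriv Γ (.neg A)
  | negOrE2 : Deriv Γ (.neg (.disj A B)) → Deriv Γ (.neg B)
  | dnI : Deriv Γ A → Deriv Γ (.neg (.neg A))
  | dnE : Deriv Γ (.neg (.neg A)) → Deriv Γ A
  | expO : Deriv Γ (.cl A) → Deriv Γ A → Deriv Γ (.neg A) → Deriv Γ B
  | pemO : Deriv Γ (.cl A) → Deriv Γ (.disj A (.neg A))
  | consR : Deriv Γ (.cl A) → Deriv Γ (.ncl A) → Deriv Γ B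
  | compR : Deriv Γ (.disj (.cl A) (.ncl A))
  | allI : Deriv Γ (.disj B (subst x (Sum.inr c) A)) → ¬ cOcc c A → ¬ cOcc c B →
      (∀ G ∈ Γ, ¬ cOcc c G) → Deriv Γ (.disj B (.all x A))
  | allE : Deriv Γ (.all x A) → Deriv Γ (subst x (Sum.inr c) A)
  | exI : Deriv Γ (subst x (Sum.inr c) A) → Deriv Γ (.ex x A)
  | exE : Deriv Γ (.ex x A) → Deriv (insert (subst x (Sum.inr c) A) Γ) C →
      ¬ cOcc c A → ¬ cOcc c C → (∀ G ∈ Γ, ¬ cOcc c G) → Deriv Γ C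
  | negAllI : Deriv Γ (.neg (subst x (Sum.inr c) A)) → Deriv Γ (.neg (.all x A))
  | negAllE : Deriv Γ (.neg (.all x A)) → Deriv (insert (.neg (subst x (Sum.inr c) A)) Γ) C →
      ¬ cOcc c A → ¬ cOcc c C → (∀ G ∈ Γ, ¬ cOcc c G) → Deriv Γ C
  | negExI : Deriv Γ (.neg (subst x (Sum.inr c) A)) → ¬ cOcc c A →
      (∀ G ∈ Γ, ¬ cOcc c G) → Deriv Γ (.neg (.ex x A))
  | negExE : Deriv Γ (.neg (.ex x A)) → Deriv Γ (.neg (subst x (Sum.inr c) A))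
  | eqI : Deriv Γ (.eq (Sum.inr c) (Sum.inr c))
  | eqE : Deriv Γ (.eq (Sum.inr c₁) (Sum.inr c₂)) → Deriv Γ (subst x (Sum.inr c₁) A) →
      Deriv Γ (subst x (Sum.inr c₂) A)
  | av : Deriv Γ A → Alpha A A' → Deriv Γ A'

/-- An S-structure: each constant denotes an element of the domain `D`, each
predicate letter gets an extension `Pplus` and an anti-extension `Pminus`;
the extension of identity is fixed as the diagonal, its anti-extension
`eqMinus` is arbitrary. -/
structure Struc (C D : Type) where
  cI : C → D
  Pplus : ℕ → List D → Prop
  Pminus : ℕ → List D → Prop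
  eqMinus : D → D → Prop

variable {C D : Type}

/-- Denotation of a constant of the diagram language (`C ⊕ D`): a diagram
constant `ā` (for `a : D`) denotes `a` itself. -/
def den (S : Struc C D) : C ⊕ D → D := Sum.elim S.cI id

/-- Clauses (1)-(7) and (10)-(13) of the valuation definition: the clauses
for atomic and negated atomic sentences, ∧, ∨, De Morgan negations,
double negation, and the substitutional quantifier clauses. -/
structure ValCore (S : Struc C D) (v : Fm (C ⊕ D) → Bool) : Prop where
  atom : ∀ (n : ℕ) (cs : List (C ⊕ D)),
    v (.pred n (cs.map Sum.inr)) = true ↔ S.Pplus n (cs.map (den S))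
  natom : ∀ (n : ℕ) (cs : List (C ⊕ D)),
    v (.neg (.pred n (cs.map Sum.inr))) = true ↔ S.Pminus n (cs.map (den S))
  eqP : ∀ a b : C ⊕ D, v (.eq (Sum.inr a) (Sum.inr b)) = true ↔ den S a = den S b
  eqN : ∀ a b : C ⊕ D, v (.neg (.eq (Sum.inr a) (Sum.inr b))) = true ↔
    S.eqMinus (den S a) (den S b)
  andC : ∀ A B, Closed A → Closed B →
    (v (.conj A B) = true ↔ v A = true ∧ v B = true)
  orC : ∀ A B, Closed A → Closed B →
    (v (.disj A B) = true ↔ v A = true ∨ v B = true)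
  nandC : ∀ A B, Closed A → Closed B →
    (v (.neg (.conj A B)) = true ↔ v (.neg A) = true ∨ v (.neg B) = true)
  norC : ∀ A B, Closed A → Closed B →
    (v (.neg (.disj A B)) = true ↔ v (.neg A) = true ∧ v (.neg B) = true)
  dnC : ∀ A, Closed A → v (.neg (.neg A)) = v A
  allC : ∀ (x : ℕ) (A : Fm (C ⊕ D)), fv A ⊆ {x} →
    (v (.all x A) = true ↔ ∀ d : D, v (subst x (Sum.inr (Sum.inr d)) A) = true)
  exC : ∀ (x : ℕ) (A : Fm (C ⊕ D)), fv A ⊆ {x} →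
    (v (.ex x A) = true ↔ ∃ d : D, v (subst x (Sum.inr (Sum.inr d)) A) = true)
  nallC : ∀ (x : ℕ) (A : Fm (C ⊕ D)), fv A ⊆ {x} →
    (v (.neg (.all x A)) = true ↔ ∃ d : D, v (.neg (subst x (Sum.inr (Sum.inr d)) A)) = true)
  nexC : ∀ (x : ℕ) (A : Fm (C ⊕ D)), fv A ⊆ {x} →
    (v (.neg (.ex x A)) = true ↔ ∀ d : D, v (.neg (subst x (Sum.inr (Sum.inr d)) A)) = true)

/-- An 𝔄-valuation for QLET_F: the determined clauses together with clauses
(8), (9), (14) (alphabetic variants) and (15). -/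
structure IsVal (S : Struc C D) (v : Fm (C ⊕ D) → Bool) extends ValCore S v : Prop where
  clC : ∀ A, Closed A → v (.cl A) = true → (v A = true ↔ v (.neg A) = false)
  compC : ∀ A, Closed A → (v (.cl A) = true ↔ v (.ncl A) = false)
  avC : ∀ A A', Closed A → Alpha A A' → v A = v A'
  substC : ∀ (x : ℕ) (A : Fm (C ⊕ D)), fv A ⊆ {x} → ∀ c₁ c₂ : C ⊕ D,
    den S c₁ = den S c₂ →
    v (subst x (Sum.inr c₁) A) = v (subst x (Sum.inr c₂) A) →
    (v (.neg (subst x (Sum.inr c₁) A)) = v (.neg (subst x (Sum.inr c₂) A)) ∧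
     v (.cl (subst x (Sum.inr c₁) A)) = v (.cl (subst x (Sum.inr c₂) A)) ∧
     v (.ncl (subst x (Sum.inr c₁) A)) = v (.ncl (subst x (Sum.inr c₂) A)))

/-- Map a formula along a renaming of its constants (used to embed the base
language into the diagram language). -/
def Fm.map (f : K → K') : Fm K → Fm K'
  | .pred n ts => .pred n (ts.map (Sum.map id f))
  | .eq a b    => .eq (Sum.map id f a) (Sum.map id f b)
  | .neg A     => .neg (Fm.map f A)
  | .conj A B  => .conj (Fm.map f A) (Fm.map f B)
  | .disj A B  => .disj (Fm.map f A) (Fm.map f B)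
  | .cl A      => .cl (Fm.map f A)
  | .ncl A     => .ncl (Fm.map f A)
  | .all y A   => .all y (Fm.map f A)
  | .ex y A    => .ex y (Fm.map f A)

/-- A sentence of the base language holds in the interpretation ⟨S, v⟩. -/
def Sat (S : Struc C D) (v : Fm (C ⊕ D) → Bool) (A : Fm C) : Prop :=
  v (A.map Sum.inl) = true

/-- Semantic consequence: every interpretation making all of Γ hold makes A hold. -/
def SemCons (Γ : Set (Fm C)) (A : Fm C) : Prop :=
  ∀ (D : Type) (S : Struc C D) (v : Fm (C ⊕ D) → Bool), Nonempty D → IsVal S v →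
    (∀ B ∈ Γ, Sat S v B) → Sat S v A

/-- Γ has a model. -/
def HasModel (Γ : Set (Fm C)) : Prop :=
  ∃ (D : Type) (S : Struc C D) (v : Fm (C ⊕ D) → Bool),
    Nonempty D ∧ IsVal S v ∧ ∀ B ∈ Γ, Sat S v B

/-- Henkin set: Δ proves an existential iff it proves some instance, and a
universal iff it proves every instance. -/
def Henkin (Δ : Set (Fm K)) : Prop :=
  ∀ (x : ℕ) (B : Fm K),
    (Deriv Δ (.ex x B) ↔ ∃ c : K, Deriv Δ (subst x (Sum.inr c) B)) ∧
    (Deriv Δ (.all x B) ↔ ∀ c : K, Deriv Δ (subst x (Sum.inr c) B))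

/-- Regular set: non-trivial, deductively closed, and disjunctive. -/
def Regular (Δ : Set (Fm K)) : Prop :=
  (∃ A, ¬ Deriv Δ A) ∧ (∀ A, Deriv Δ A → A ∈ Δ) ∧
  (∀ A B, Deriv Δ (.disj A B) → Deriv Δ A ∨ Deriv Δ B)

end QLETF

namespace S2
open QLETF

/-- Size of a formula (number of connectives/quantifiers). -/
def sz {K : Type} : Fm K → ℕ
  | .pred _ _ => 0
  | .eq _ _   => 0
  | .neg A    => sz A + 1
  | .conj A B => sz A + sz B + 1
  | .disj A B => sz A + sz B + 1
  | .cl A     => sz A + 1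
  | .ncl A    => sz A + 1
  | .all _ A  => sz A + 1
  | .ex _ A   => sz A + 1

lemma sz_subst {K : Type} (x : ℕ) (t : ℕ ⊕ K) (A : Fm K) :
    sz (subst x t A) = sz A := by
  induction A generalizing x t with
  | pred n ts => simp [subst, sz]
  | eq a b => simp [subst, sz]
  | neg A ih => simp [subst, sz, ih]
  | conj A B ihA ihB => simp [subst, sz, ihA, ihB]
  | disj A B ihA ihB => simp [subst, sz, ihA, ihB]
  | cl A ih => simp [subst, sz, ih]
  | ncl A ih => simp [subst, sz, ih]
  | all y A ih => by_cases hy : y = x <;> simp [subst, sz, hy, ih]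
  | ex y A ih => by_cases hy : y = x <;> simp [subst, sz, hy, ih]

lemma fv_subst {K : Type} (x : ℕ) (c : K) (A : Fm K) :
    fv (subst x (Sum.inr c) A) ⊆ fv A \ {x} := by
  induction A generalizing x with
  | pred n ts =>
      intro y hy
      simp only [subst, fv, Set.mem_setOf_eq, List.mem_map] at hy
      obtain ⟨t, ht, hty⟩ := hy
      rcases t with z | k
      · by_cases hzx : z = x
        · simp [substT, hzx] at hty
        · simp [substT, hzx] at hty
          subst hty
          exact ⟨by simpa [fv] using ht, by simpa using hzx⟩
      · simp [substT] at hty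
  | eq a b =>
      intro y hy
      simp only [subst, fv, Set.mem_setOf_eq] at hy
      have key : ∀ t : ℕ ⊕ K, substT x (Sum.inr c) t = Sum.inl y →
          t = Sum.inl y ∧ y ≠ x := by
        intro t ht
        rcases t with z | k
        · by_cases hzx : z = x
          · simp [substT, hzx] at ht
          · simp [substT, hzx] at ht
            subst ht
            exact ⟨rfl, hzx⟩
        · simp [substT] at ht
      rcases hy with hy | hy
      · obtain ⟨h1, h2⟩ := key a hy
        exact ⟨Or.inl h1, by simpa using h2⟩
      · obtain ⟨h1, h2⟩ := key b hy
        exact ⟨Or.inr h1, by simpa using h2⟩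
  | neg A ih => simpa [subst, fv] using ih x
  | conj A B ihA ihB =>
      intro y hy
      rcases hy with hy | hy
      · rcases ihA x hy with ⟨h1, h2⟩; exact ⟨Or.inl h1, h2⟩
      · rcases ihB x hy with ⟨h1, h2⟩; exact ⟨Or.inr h1, h2⟩
  | disj A B ihA ihB =>
      intro y hy
      rcases hy with hy | hy
      · rcases ihA x hy with ⟨h1, h2⟩; exact ⟨Or.inl h1, h2⟩
      · rcases ihB x hy with ⟨h1, h2⟩; exact ⟨Or.inr h1, h2⟩
  | cl A ih => simpa [subst, fv] using ih x
  | ncl A ih => simpa [subst, fv] using ih x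
  | all z A ih =>
      by_cases hz : z = x
      · subst hz
        simp only [subst, if_pos rfl]
        intro y hy
        rcases hy with ⟨h1, h2⟩
        exact ⟨⟨h1, h2⟩, h2⟩
      · simp only [subst, if_neg hz]
        intro y hy
        rcases hy with ⟨h1, h2⟩
        rcases ih x h1 with ⟨h3, h4⟩
        exact ⟨⟨h3, h2⟩, h4⟩
  | ex z A ih =>
      by_cases hz : z = x
      · subst hz
        simp only [subst, if_pos rfl]
        intro y hy
        rcases hy with ⟨h1, h2⟩
        exact ⟨⟨h1, h2⟩, h2⟩
      · simp only [subst, if_neg hz]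
        intro y hy
        rcases hy with ⟨h1, h2⟩
        rcases ih x h1 with ⟨h3, h4⟩
        exact ⟨⟨h3, h2⟩, h4⟩

lemma closed_subst {K : Type} {x : ℕ} {A : Fm K} (hA : fv A ⊆ {x}) (c : K) :
    Closed (subst x (Sum.inr c) A) := by
  unfold Closed
  apply Set.eq_empty_iff_forall_notMem.mpr
  intro y hy
  rcases fv_subst x c A hy with ⟨h1, h2⟩
  exact h2 (hA h1)

lemma substT_comm {K : Type} {x y : ℕ} (hxy : x ≠ y) (c d : K) (t : ℕ ⊕ K) :
    substT y (Sum.inr d) (substT x (Sum.inr c) t)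
      = substT x (Sum.inr c) (substT y (Sum.inr d) t) := by
  rcases t with z | k
  · by_cases hzx : z = x
    · subst hzx
      simp [substT, hxy]
    · by_cases hzy : z = y
      · subst hzy
        simp [substT, Ne.symm hxy]
      · simp [substT, hzx, hzy]
  · simp [substT]

lemma subst_comm {K : Type} {x y : ℕ} (hxy : x ≠ y) (c d : K) (A : Fm K) :
    subst y (Sum.inr d) (subst x (Sum.inr c) A)
      = subst x (Sum.inr c) (subst y (Sum.inr d) A) := by
  induction A with
  | pred n ts =>
      simp only [subst, List.map_map]
      congr 1
      apply List.map_congr_left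
      intro t _
      exact substT_comm hxy c d t
  | eq a b => simp only [subst, substT_comm hxy]
  | neg A ih => simp [subst, ih]
  | conj A B ihA ihB => simp [subst, ihA, ihB]
  | disj A B ihA ihB => simp [subst, ihA, ihB]
  | cl A ih => simp [subst, ih]
  | ncl A ih => simp [subst, ih]
  | all z A ih =>
      by_cases hzx : z = x
      · subst hzx
        simp [subst, hxy]
      · by_cases hzy : z = y
        · subst hzy
          simp [subst, hzx]
        · simp [subst, hzx, hzy, ih]
  | ex z A ih =>
      by_cases hzx : z = x
      · subst hzx
        simp [subst, hxy]
      · by_cases hzy : z = y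
        · subst hzy
          simp [subst, hzx]
        · simp [subst, hzx, hzy, ih]

/-- Term denotation helper: collapse a term with only variable `x` to a
constant, sending the variable to `c`. -/
def gc {C D : Type} (c : C ⊕ D) : (ℕ ⊕ (C ⊕ D)) → (C ⊕ D) :=
  Sum.elim (fun _ => c) id

lemma substT_eq_gc {C D : Type} {x : ℕ} (c : C ⊕ D) {t : ℕ ⊕ (C ⊕ D)}
    (ht : ∀ y : ℕ, t = Sum.inl y → y = x) :
    substT x (Sum.inr c) t = Sum.inr (gc c t) := by
  rcases t with z | k
  · have : z = x := ht z rfl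
    subst this
    simp [substT, gc]
  · simp [substT, gc]

lemma den_gc_eq {C D : Type} (S : Struc C D) {c₁ c₂ : C ⊕ D}
    (h : den S c₁ = den S c₂) (t : ℕ ⊕ (C ⊕ D)) :
    den S (gc c₁ t) = den S (gc c₂ t) := by
  rcases t with z | k
  · simpa [gc] using h
  · simp [gc]

section Main

variable {C D : Type} (S : Struc C D) (v : Fm (C ⊕ D) → Bool)

lemma pred_case (hv : IsVal S v) (x : ℕ) (c₁ c₂ : C ⊕ D)
    (h : den S c₁ = den S c₂) (n : ℕ) (ts : List (ℕ ⊕ (C ⊕ D)))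
    (hA : fv (Fm.pred n ts) ⊆ {x}) :
    v (subst x (Sum.inr c₁) (Fm.pred n ts)) = v (subst x (Sum.inr c₂) (Fm.pred n ts)) := by
  have hvar : ∀ t ∈ ts, ∀ y : ℕ, t = Sum.inl y → y = x := by
    intro t ht y hy
    subst hy
    have : y ∈ fv (Fm.pred n ts) := by simpa [fv] using ht
    simpa using hA this
  have hmap : ∀ c : C ⊕ D, ts.map (substT x (Sum.inr c)) = (ts.map (gc c)).map Sum.inr := by
    intro c
    rw [List.map_map]
    apply List.map_congr_left
    intro t ht
    exact substT_eq_gc c (hvar t ht)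
  have hden : (ts.map (gc c₁)).map (den S) = (ts.map (gc c₂)).map (den S) := by
    simp only [List.map_map]
    apply List.map_congr_left
    intro t _
    exact den_gc_eq S h t
  have h1 := hv.toValCore.atom n (ts.map (gc c₁))
  have h2 := hv.toValCore.atom n (ts.map (gc c₂))
  rw [hden] at h1
  simp only [subst, hmap]
  exact Bool.coe_iff_coe.mp (h1.trans h2.symm)

lemma eq_case (hv : IsVal S v) (x : ℕ) (c₁ c₂ : C ⊕ D)
    (h : den S c₁ = den S c₂) (a b : ℕ ⊕ (C ⊕ D))
    (hA : fv (Fm.eq a b) ⊆ {x}) :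
    v (subst x (Sum.inr c₁) (Fm.eq a b)) = v (subst x (Sum.inr c₂) (Fm.eq a b)) := by
  have hva : ∀ y : ℕ, a = Sum.inl y → y = x := by
    intro y hy
    have : y ∈ fv (Fm.eq a b) := by simp [fv, hy]
    simpa using hA this
  have hvb : ∀ y : ℕ, b = Sum.inl y → y = x := by
    intro y hy
    have : y ∈ fv (Fm.eq a b) := by simp [fv, hy]
    simpa using hA this
  have h1 := hv.toValCore.eqP (gc c₁ a) (gc c₁ b)
  have h2 := hv.toValCore.eqP (gc c₂ a) (gc c₂ b)
  rw [den_gc_eq S h a, den_gc_eq S h b] at h1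
  simp only [subst, substT_eq_gc c₁ hva, substT_eq_gc c₁ hvb,
    substT_eq_gc c₂ hva, substT_eq_gc c₂ hvb]
  exact Bool.coe_iff_coe.mp (h1.trans h2.symm)

lemma main_lemma (hv : IsVal S v) (x : ℕ) (c₁ c₂ : C ⊕ D)
    (h : den S c₁ = den S c₂) :
    ∀ (n : ℕ) (A : Fm (C ⊕ D)), sz A ≤ n → fv A ⊆ {x} →
      v (subst x (Sum.inr c₁) A) = v (subst x (Sum.inr c₂) A) := by
  intro n
  induction n with
  | zero =>
      intro A hsz hA
      cases A with
      | pred m ts => exact pred_case S v hv x c₁ c₂ h m ts hA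
      | eq a b => exact eq_case S v hv x c₁ c₂ h a b hA
      | neg A => simp [sz] at hsz
      | conj A B => simp [sz] at hsz
      | disj A B => simp [sz] at hsz
      | cl A => simp [sz] at hsz
      | ncl A => simp [sz] at hsz
      | all y A => simp [sz] at hsz
      | ex y A => simp [sz] at hsz
  | succ n ih =>
      intro A hsz hA
      cases A with
      | pred m ts => exact pred_case S v hv x c₁ c₂ h m ts hA
      | eq a b => exact eq_case S v hv x c₁ c₂ h a b hA
      | neg A =>
          have hszA : sz A ≤ n := by simpa [sz] using Nat.lt_succ_iff.mp (Nat.lt_of_lt_of_le (Nat.lt_succ_self _) (by simpa [sz] using hsz))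
          have hfvA : fv A ⊆ {x} := hA
          have hIH := ih A hszA hfvA
          have := (hv.substC x A hfvA c₁ c₂ h hIH).1
          simpa [subst] using this
      | conj A B =>
          have hszA : sz A ≤ n := by
            have : sz A + sz B + 1 ≤ n + 1 := by simpa [sz] using hsz
            omega
          have hszB : sz B ≤ n := by
            have : sz A + sz B + 1 ≤ n + 1 := by simpa [sz] using hsz
            omega
          have hfvA : fv A ⊆ {x} := fun y hy => hA (Or.inl hy)
          have hfvB : fv B ⊆ {x} := fun y hy => hA (Or.inr hy)
          have hIA := ih A hszA hfvA
          have hIB := ih B hszB hfvB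
          have e1 := hv.toValCore.andC _ _ (closed_subst hfvA c₁) (closed_subst hfvB c₁)
          have e2 := hv.toValCore.andC _ _ (closed_subst hfvA c₂) (closed_subst hfvB c₂)
          simp only [subst]
          apply Bool.coe_iff_coe.mp
          rw [e1, e2, hIA, hIB]
      | disj A B =>
          have hszA : sz A ≤ n := by
            have : sz A + sz B + 1 ≤ n + 1 := by simpa [sz] using hsz
            omega
          have hszB : sz B ≤ n := by
            have : sz A + sz B + 1 ≤ n + 1 := by simpa [sz] using hsz
            omega
          have hfvA : fv A ⊆ {x} := fun y hy => hA (Or.inl hy)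
          have hfvB : fv B ⊆ {x} := fun y hy => hA (Or.inr hy)
          have hIA := ih A hszA hfvA
          have hIB := ih B hszB hfvB
          have e1 := hv.toValCore.orC _ _ (closed_subst hfvA c₁) (closed_subst hfvB c₁)
          have e2 := hv.toValCore.orC _ _ (closed_subst hfvA c₂) (closed_subst hfvB c₂)
          simp only [subst]
          apply Bool.coe_iff_coe.mp
          rw [e1, e2, hIA, hIB]
      | cl A =>
          have hszA : sz A ≤ n := by
            have : sz A + 1 ≤ n + 1 := by simpa [sz] using hsz
            omega
          have hfvA : fv A ⊆ {x} := hA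
          have hIH := ih A hszA hfvA
          have := (hv.substC x A hfvA c₁ c₂ h hIH).2.1
          simpa [subst] using this
      | ncl A =>
          have hszA : sz A ≤ n := by
            have : sz A + 1 ≤ n + 1 := by simpa [sz] using hsz
            omega
          have hfvA : fv A ⊆ {x} := hA
          have hIH := ih A hszA hfvA
          have := (hv.substC x A hfvA c₁ c₂ h hIH).2.2
          simpa [subst] using this
      | all y A =>
          by_cases hyx : y = x
          · simp [subst, hyx]
          · have hszA : sz A ≤ n := by
              have : sz A + 1 ≤ n + 1 := by simpa [sz] using hsz
              omega
            have hfvq : ∀ c : C ⊕ D, fv (subst x (Sum.inr c) A) ⊆ {y} := by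
              intro c z hz
              rcases fv_subst x c A hz with ⟨h1, h2⟩
              by_cases hzy : z = y
              · simpa using hzy
              · have : z ∈ fv (Fm.all y A) := ⟨h1, by simpa using hzy⟩
                exact absurd (hA this) (by simpa using h2)
            have hinst : ∀ d : D,
                v (subst y (Sum.inr (Sum.inr d)) (subst x (Sum.inr c₁) A)) =
                v (subst y (Sum.inr (Sum.inr d)) (subst x (Sum.inr c₂) A)) := by
              intro d
              rw [subst_comm (fun hh => hyx hh.symm) c₁ (Sum.inr d) A,
                  subst_comm (fun hh => hyx hh.symm) c₂ (Sum.inr d) A]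
              apply ih
              · rw [sz_subst]; exact hszA
              · intro z hz
                rcases fv_subst y (Sum.inr d) A hz with ⟨h1, h2⟩
                exact hA ⟨h1, by simpa using h2⟩
            have e1 := hv.toValCore.allC y (subst x (Sum.inr c₁) A) (hfvq c₁)
            have e2 := hv.toValCore.allC y (subst x (Sum.inr c₂) A) (hfvq c₂)
            simp only [subst, if_neg hyx]
            apply Bool.coe_iff_coe.mp
            rw [e1, e2]
            exact forall_congr' fun d => by rw [hinst d]
      | ex y A =>
          by_cases hyx : y = x
          · simp [subst, hyx]
          · have hszA : sz A ≤ n := by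
              have : sz A + 1 ≤ n + 1 := by simpa [sz] using hsz
              omega
            have hfvq : ∀ c : C ⊕ D, fv (subst x (Sum.inr c) A) ⊆ {y} := by
              intro c z hz
              rcases fv_subst x c A hz with ⟨h1, h2⟩
              by_cases hzy : z = y
              · simpa using hzy
              · have : z ∈ fv (Fm.ex y A) := ⟨h1, by simpa using hzy⟩
                exact absurd (hA this) (by simpa using h2)
            have hinst : ∀ d : D,
                v (subst y (Sum.inr (Sum.inr d)) (subst x (Sum.inr c₁) A)) =
                v (subst y (Sum.inr (Sum.inr d)) (subst x (Sum.inr c₂) A)) := by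
              intro d
              rw [subst_comm (fun hh => hyx hh.symm) c₁ (Sum.inr d) A,
                  subst_comm (fun hh => hyx hh.symm) c₂ (Sum.inr d) A]
              apply ih
              · rw [sz_subst]; exact hszA
              · intro z hz
                rcases fv_subst y (Sum.inr d) A hz with ⟨h1, h2⟩
                exact hA ⟨h1, by simpa using h2⟩
            have e1 := hv.toValCore.exC y (subst x (Sum.inr c₁) A) (hfvq c₁)
            have e2 := hv.toValCore.exC y (subst x (Sum.inr c₂) A) (hfvq c₂)
            simp only [subst, if_neg hyx]
            apply Bool.coe_iff_coe.mp
            rw [e1, e2]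
            exact exists_congr fun d => by rw [hinst d]

end Main

/-- Substitution lemma for QLET_F valuations: co-denoting constants are
interchangeable in any sentence with at most one free variable. -/
theorem substitution_lemma {C D : Type} (S : Struc C D) (v : Fm (C ⊕ D) → Bool)
    (hv : IsVal S v) (x : ℕ) (A : Fm (C ⊕ D)) (hA : fv A ⊆ {x})
    (c₁ c₂ : C ⊕ D) (h : den S c₁ = den S c₂) :
    v (subst x (Sum.inr c₁) A) = v (subst x (Sum.inr c₂) A) :=
  main_lemma S v hv x c₁ c₂ h (sz A) A le_rfl hA

end S2
end

section
/- For ∘- and •-free formulas, the substitution lemma holds without relying on the non-deterministic clause: if A is a formula of the diagram language with at most one free variable x, containing no occurrence of ° or •, and c₁, c₂ are constants denoting the same element of the domain, then v(A(c₁/x)) = v(A(c₂/x)), provable without using clause (15) of the valuation definition. -/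
set_option autoImplicit true
set_option relaxedAutoImplicit true

/-! Let the evidence of a sentence `A` under `v` be the pair `(v A, v ¬A)`. Clauses (1)-(7) and
(10)-(13) make the evidence of a sentence built by `¬`, `∧`, `∨`, `∀`, `∃` a function of the
evidence of its components (for `¬` through double negation, for quantifiers through the
instances by diagram constants), while atomic sentences see their constants only through `den`.
Only `∘` and `•` escape this, which is why clause (15) exists. Hence the evidence of `A(c₁/x)`
and `A(c₂/x)` agrees, by induction on the number of connectives of `A`; this number is invariant
under substitution, so the quantifier case may apply the induction hypothesis to `A(d/y)`, using
`A(c/x)(d/y) = A(d/y)(c/x)`. Carrying `v ¬A` along is forced: the negation clauses for compound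
sentences are De Morgan clauses, not `v ¬A = !v A`. -/

namespace QLETF

variable {K C D : Type}

lemma substT_eq_inl_iff {x y : ℕ} {c : K} {t : ℕ ⊕ K} :
    substT x (.inr c) t = .inl y ↔ t = .inl y ∧ y ≠ x := by
  cases t with
  | inl z => by_cases hz : z = x <;> simp [substT, hz] <;> omega
  | inr _ => simp [substT]

lemma substT_eq_inr {x : ℕ} {c : K} {t : ℕ ⊕ K} (ht : ∀ y, t = .inl y → y = x) :
    substT x (.inr c) t = .inr (Sum.elim (fun _ => c) id t) := by
  cases t with
  | inl z => simp [substT, ht z rfl]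
  | inr _ => rfl

lemma map_substT_eq_map_inr {x : ℕ} {c : K} {ts : List (ℕ ⊕ K)}
    (hts : ∀ y, .inl y ∈ ts → y = x) :
    ts.map (substT x (.inr c)) = (ts.map (Sum.elim (fun _ => c) id)).map .inr := by
  rw [List.map_map]
  exact List.map_congr_left fun t ht => substT_eq_inr fun y hy => hts y (hy ▸ ht)

lemma fv_subst_inr (x : ℕ) (c : K) (A : Fm K) : fv (subst x (.inr c) A) = fv A \ {x} := by
  induction A with
  | pred n ts => ext y; simp [fv, subst, substT_eq_inl_iff]
  | eq a b => ext y; simp [fv, subst, substT_eq_inl_iff]; tauto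
  | neg A ih | cl A ih | ncl A ih => exact ih
  | conj A B ihA ihB | disj A B ihA ihB => simp only [fv, subst, ihA, ihB, Set.union_sdiff_distrib]
  | all z A ih | ex z A ih =>
    by_cases hz : z = x
    · subst hz; simp [fv, subst]
    · simp only [fv, subst, if_neg hz, ih, Set.sdiff_sdiff_comm]

lemma closed_subst_inr {x : ℕ} {A : Fm K} (hA : fv A ⊆ {x}) (c : K) :
    Closed (subst x (.inr c) A) := by
  rw [Closed, fv_subst_inr, Set.sdiff_eq_empty]
  exact hA

lemma fv_subst_inr_subset_of_sdiff_subset {x y : ℕ} {A : Fm K} (hA : fv A \ {y} ⊆ {x}) (c : K) :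
    fv (subst x (.inr c) A) ⊆ {y} := by
  rw [fv_subst_inr, Set.sdiff_subset_iff, Set.union_comm, ← Set.sdiff_subset_iff]
  exact hA

lemma substT_comm {x y : ℕ} (hyx : y ≠ x) (c d : K) (t : ℕ ⊕ K) :
    substT y (.inr d) (substT x (.inr c) t) = substT x (.inr c) (substT y (.inr d) t) := by
  cases t with
  | inl z => by_cases hzx : z = x <;> by_cases hzy : z = y <;> simp_all [substT]
  | inr _ => rfl

lemma subst_comm {x y : ℕ} (hyx : y ≠ x) (c d : K) (A : Fm K) :
    subst y (.inr d) (subst x (.inr c) A) = subst x (.inr c) (subst y (.inr d) A) := by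
  induction A with
  | pred n ts => simp only [subst, List.map_map, Function.comp_def, substT_comm hyx]
  | eq a b => simp only [subst, substT_comm hyx]
  | neg A ih | cl A ih | ncl A ih => simp only [subst, ih]
  | conj A B ihA ihB | disj A B ihA ihB => simp only [subst, ihA, ihB]
  | all z A ih | ex z A ih => by_cases hzx : z = x <;> by_cases hzy : z = y <;> simp_all [subst]

lemma clFree_subst {A : Fm K} (hA : clFree A) (x : ℕ) (t : ℕ ⊕ K) : clFree (subst x t A) := by
  induction A with
  | pred | eq => trivial
  | neg A ih => exact ih hA
  | conj A B ihA ihB | disj A B ihA ihB => exact ⟨ihA hA.1, ihB hA.2⟩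
  | cl | ncl => exact hA.elim
  | all y A ih | ex y A ih =>
    by_cases hy : y = x <;> simp only [subst, hy, if_true, if_false]
    exacts [hA, ih hA]

def complexity : Fm K → ℕ
  | .pred _ _ | .eq _ _ => 0
  | .neg A | .cl A | .ncl A | .all _ A | .ex _ A => complexity A + 1
  | .conj A B | .disj A B => complexity A + complexity B + 1

@[simp]
lemma complexity_subst (x : ℕ) (t : ℕ ⊕ K) (A : Fm K) :
    complexity (subst x t A) = complexity A := by
  induction A with
  | pred | eq => rfl
  | neg A ih | cl A ih | ncl A ih => simp only [subst, complexity, ih]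
  | conj A B ihA ihB | disj A B ihA ihB => simp only [subst, complexity, ihA, ihB]
  | all y A ih | ex y A ih =>
    by_cases hy : y = x <;> simp only [subst, hy, if_true, if_false, complexity, ih]

def evidence (v : Fm K → Bool) (A : Fm K) : Bool × Bool := (v A, v (.neg A))

namespace ValCore

variable {S : Struc C D} {v : Fm (C ⊕ D) → Bool}

lemma evidence_pred_congr (hv : ValCore S v) (n : ℕ) {cs₁ cs₂ : List (C ⊕ D)}
    (h : cs₁.map (den S) = cs₂.map (den S)) :
    evidence v (.pred n (cs₁.map .inr)) = evidence v (.pred n (cs₂.map .inr)) := by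
  simp only [evidence, Prod.mk.injEq, Bool.eq_iff_iff, hv.atom, hv.natom, h, and_self]

lemma evidence_eq_congr (hv : ValCore S v) {a₁ a₂ b₁ b₂ : C ⊕ D}
    (ha : den S a₁ = den S a₂) (hb : den S b₁ = den S b₂) :
    evidence v (.eq (.inr a₁) (.inr b₁)) = evidence v (.eq (.inr a₂) (.inr b₂)) := by
  simp only [evidence, Prod.mk.injEq, Bool.eq_iff_iff, hv.eqP, hv.eqN, ha, hb, and_self]

lemma evidence_neg_congr (hv : ValCore S v) {A₁ A₂ : Fm (C ⊕ D)} (h₁ : Closed A₁)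
    (h₂ : Closed A₂) (h : evidence v A₁ = evidence v A₂) :
    evidence v (.neg A₁) = evidence v (.neg A₂) := by
  simp only [evidence, Prod.mk.injEq, hv.dnC _ h₁, hv.dnC _ h₂] at h ⊢
  exact h.symm

lemma evidence_conj_congr (hv : ValCore S v) {A₁ A₂ B₁ B₂ : Fm (C ⊕ D)}
    (hA₁ : Closed A₁) (hA₂ : Closed A₂) (hB₁ : Closed B₁) (hB₂ : Closed B₂)
    (hA : evidence v A₁ = evidence v A₂) (hB : evidence v B₁ = evidence v B₂) :
    evidence v (.conj A₁ B₁) = evidence v (.conj A₂ B₂) := by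
  simp only [evidence, Prod.mk.injEq] at hA hB ⊢
  constructor <;> rw [Bool.eq_iff_iff]
  · rw [hv.andC _ _ hA₁ hB₁, hv.andC _ _ hA₂ hB₂, hA.1, hB.1]
  · rw [hv.nandC _ _ hA₁ hB₁, hv.nandC _ _ hA₂ hB₂, hA.2, hB.2]

lemma evidence_disj_congr (hv : ValCore S v) {A₁ A₂ B₁ B₂ : Fm (C ⊕ D)}
    (hA₁ : Closed A₁) (hA₂ : Closed A₂) (hB₁ : Closed B₁) (hB₂ : Closed B₂)
    (hA : evidence v A₁ = evidence v A₂) (hB : evidence v B₁ = evidence v B₂) :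
    evidence v (.disj A₁ B₁) = evidence v (.disj A₂ B₂) := by
  simp only [evidence, Prod.mk.injEq] at hA hB ⊢
  constructor <;> rw [Bool.eq_iff_iff]
  · rw [hv.orC _ _ hA₁ hB₁, hv.orC _ _ hA₂ hB₂, hA.1, hB.1]
  · rw [hv.norC _ _ hA₁ hB₁, hv.norC _ _ hA₂ hB₂, hA.2, hB.2]

lemma evidence_all_congr (hv : ValCore S v) {x : ℕ} {A₁ A₂ : Fm (C ⊕ D)}
    (h₁ : fv A₁ ⊆ {x}) (h₂ : fv A₂ ⊆ {x})
    (h : ∀ d : D, evidence v (subst x (.inr (.inr d)) A₁) =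
      evidence v (subst x (.inr (.inr d)) A₂)) :
    evidence v (.all x A₁) = evidence v (.all x A₂) := by
  simp only [evidence, Prod.mk.injEq] at h ⊢
  constructor <;> rw [Bool.eq_iff_iff]
  · rw [hv.allC x _ h₁, hv.allC x _ h₂]
    exact forall_congr' fun d => by rw [(h d).1]
  · rw [hv.nallC x _ h₁, hv.nallC x _ h₂]
    exact exists_congr fun d => by rw [(h d).2]

lemma evidence_ex_congr (hv : ValCore S v) {x : ℕ} {A₁ A₂ : Fm (C ⊕ D)}
    (h₁ : fv A₁ ⊆ {x}) (h₂ : fv A₂ ⊆ {x})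
    (h : ∀ d : D, evidence v (subst x (.inr (.inr d)) A₁) =
      evidence v (subst x (.inr (.inr d)) A₂)) :
    evidence v (.ex x A₁) = evidence v (.ex x A₂) := by
  simp only [evidence, Prod.mk.injEq] at h ⊢
  constructor <;> rw [Bool.eq_iff_iff]
  · rw [hv.exC x _ h₁, hv.exC x _ h₂]
    exact exists_congr fun d => by rw [(h d).1]
  · rw [hv.nexC x _ h₁, hv.nexC x _ h₂]
    exact forall_congr' fun d => by rw [(h d).2]

lemma evidence_subst_congr (hv : ValCore S v) {c₁ c₂ : C ⊕ D} (h : den S c₁ = den S c₂) :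
    ∀ (A : Fm (C ⊕ D)) (x : ℕ), clFree A → fv A ⊆ {x} →
      evidence v (subst x (.inr c₁) A) = evidence v (subst x (.inr c₂) A)
  | .pred n ts, x, _, hA => by
    simp only [subst, map_substT_eq_map_inr fun y hy => hA hy]
    refine hv.evidence_pred_congr n ?_
    simp only [List.map_map]
    exact List.map_congr_left fun t _ => by cases t <;> simp [h]
  | .eq a b, x, _, hA => by
    simp only [subst, substT_eq_inr fun y hy => hA (Or.inl hy),
      substT_eq_inr fun y hy => hA (Or.inr hy)]
    exact hv.evidence_eq_congr (by cases a <;> simp [h]) (by cases b <;> simp [h])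
  | .neg A, x, hfree, hA =>
    hv.evidence_neg_congr (closed_subst_inr hA _) (closed_subst_inr hA _)
      (evidence_subst_congr hv h A x hfree hA)
  | .conj A B, x, hfree, hAB => by
    rw [fv, Set.union_subset_iff] at hAB
    exact hv.evidence_conj_congr (closed_subst_inr hAB.1 _) (closed_subst_inr hAB.1 _)
      (closed_subst_inr hAB.2 _) (closed_subst_inr hAB.2 _)
      (evidence_subst_congr hv h A x hfree.1 hAB.1)
      (evidence_subst_congr hv h B x hfree.2 hAB.2)
  | .disj A B, x, hfree, hAB => by
    rw [fv, Set.union_subset_iff] at hAB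
    exact hv.evidence_disj_congr (closed_subst_inr hAB.1 _) (closed_subst_inr hAB.1 _)
      (closed_subst_inr hAB.2 _) (closed_subst_inr hAB.2 _)
      (evidence_subst_congr hv h A x hfree.1 hAB.1)
      (evidence_subst_congr hv h B x hfree.2 hAB.2)
  | .cl _, _, hfree, _ | .ncl _, _, hfree, _ => hfree.elim
  | .all y A, x, hfree, hA => by
    by_cases hyx : y = x
    · simp only [subst, hyx, if_true]
    simp only [subst, hyx, if_false]
    refine hv.evidence_all_congr (fv_subst_inr_subset_of_sdiff_subset hA _)
      (fv_subst_inr_subset_of_sdiff_subset hA _) fun d => ?_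
    rw [subst_comm hyx, subst_comm hyx]
    exact evidence_subst_congr hv h _ x (clFree_subst (A := A) hfree y _)
      ((fv_subst_inr y _ A).trans_subset hA)
  | .ex y A, x, hfree, hA => by
    by_cases hyx : y = x
    · simp only [subst, hyx, if_true]
    simp only [subst, hyx, if_false]
    refine hv.evidence_ex_congr (fv_subst_inr_subset_of_sdiff_subset hA _)
      (fv_subst_inr_subset_of_sdiff_subset hA _) fun d => ?_
    rw [subst_comm hyx, subst_comm hyx]
    exact evidence_subst_congr hv h _ x (clFree_subst (A := A) hfree y _)
      ((fv_subst_inr y _ A).trans_subset hA)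
termination_by A => complexity A
decreasing_by all_goals simp only [complexity, complexity_subst]; omega

end ValCore

end QLETF

namespace S3
open QLETF

/-- Substitution lemma for ∘- and •-free formulas: it holds for any map
satisfying only the determined clauses (1)-(7), (10)-(13) of the valuation
definition, i.e. without clause (15). -/
theorem substitution_lemma_clfree {C D : Type} (S : Struc C D) (v : Fm (C ⊕ D) → Bool)
    (hv : ValCore S v) (x : ℕ) (A : Fm (C ⊕ D)) (hfree : clFree A) (hA : fv A ⊆ {x})
    (c₁ c₂ : C ⊕ D) (h : den S c₁ = den S c₂) :
    v (subst x (Sum.inr c₁) A) = v (subst x (Sum.inr c₂) A) :=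
  congrArg Prod.fst (hv.evidence_subst_congr h A x hfree hA)

end S3
end

section
/- Soundness of QLET_F: for every signature S and every set of sentences Γ ∪ {A} over S, if A is derivable from Γ in the natural deduction system QLET_F, then A is a semantic consequence of Γ, i.e., every S-interpretation ⟨𝔄, v⟩ in which all members of Γ hold also makes A hold. -/
set_option autoImplicit true
set_option relaxedAutoImplicit true

namespace S5
open QLETF

attribute [local instance low] Classical.propDecidable

variable {K : Type}

/-- Simultaneous substitution on terms. -/
def csubstT (σ : ℕ → ℕ ⊕ K) : ℕ ⊕ K → ℕ ⊕ K
  | .inl y => σ y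
  | .inr c => .inr c

/-- Simultaneous substitution on formulas (closing substitutions only intended). -/
def csubst (σ : ℕ → ℕ ⊕ K) : Fm K → Fm K
  | .pred n ts => .pred n (ts.map (csubstT σ))
  | .eq a b    => .eq (csubstT σ a) (csubstT σ b)
  | .neg A     => .neg (csubst σ A)
  | .conj A B  => .conj (csubst σ A) (csubst σ B)
  | .disj A B  => .disj (csubst σ A) (csubst σ B)
  | .cl A      => .cl (csubst σ A)
  | .ncl A     => .ncl (csubst σ A)
  | .all y A   => .all y (csubst (Function.update σ y (.inl y)) A)
  | .ex y A    => .ex y (csubst (Function.update σ y (.inl y)) A)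

lemma csubst_congr : ∀ (A : Fm K) (σ σ' : ℕ → ℕ ⊕ K),
    (∀ w ∈ fv A, σ w = σ' w) → csubst σ A = csubst σ' A := by
  intro A
  induction A with
  | pred n ts =>
    intro σ σ' h
    simp only [csubst]
    congr 1
    apply List.map_congr_left
    intro t ht
    cases t with
    | inl y => exact h y ht
    | inr c => rfl
  | eq a b =>
    intro σ σ' h
    simp only [csubst]
    cases a with
    | inl y => cases b with
      | inl z => simp [csubstT, h y (Or.inl rfl), h z (Or.inr rfl)]
      | inr c => simp [csubstT, h y (Or.inl rfl)]
    | inr c => cases b with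
      | inl z => simp [csubstT, h z (Or.inr rfl)]
      | inr c' => rfl
  | neg A ih => intro σ σ' h; simp only [csubst]; rw [ih σ σ' h]
  | conj A B ihA ihB =>
    intro σ σ' h
    simp only [csubst]
    rw [ihA σ σ' (fun w hw => h w (Or.inl hw)), ihB σ σ' (fun w hw => h w (Or.inr hw))]
  | disj A B ihA ihB =>
    intro σ σ' h
    simp only [csubst]
    rw [ihA σ σ' (fun w hw => h w (Or.inl hw)), ihB σ σ' (fun w hw => h w (Or.inr hw))]
  | cl A ih => intro σ σ' h; simp only [csubst]; rw [ih σ σ' h]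
  | ncl A ih => intro σ σ' h; simp only [csubst]; rw [ih σ σ' h]
  | all y A ih =>
    intro σ σ' h
    simp only [csubst]
    rw [ih _ _ ?_]
    intro w hw
    by_cases hwy : w = y
    · subst hwy; simp
    · simp only [Function.update_of_ne hwy]
      exact h w ⟨hw, hwy⟩
  | ex y A ih =>
    intro σ σ' h
    simp only [csubst]
    rw [ih _ _ ?_]
    intro w hw
    by_cases hwy : w = y
    · subst hwy; simp
    · simp only [Function.update_of_ne hwy]
      exact h w ⟨hw, hwy⟩

lemma csubst_id : ∀ A : Fm K, csubst Sum.inl A = A := by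
  intro A
  induction A with
  | pred n ts =>
    simp only [csubst]
    congr 1
    rw [show csubstT (Sum.inl : ℕ → ℕ ⊕ K) = id from funext (fun t => by cases t <;> rfl)]
    simp
  | eq a b => cases a <;> cases b <;> rfl
  | neg A ih => simp only [csubst]; rw [ih]
  | conj A B ihA ihB => simp only [csubst]; rw [ihA, ihB]
  | disj A B ihA ihB => simp only [csubst]; rw [ihA, ihB]
  | cl A ih => simp only [csubst]; rw [ih]
  | ncl A ih => simp only [csubst]; rw [ih]
  | all y A ih =>
    simp only [csubst]
    rw [show Function.update (Sum.inl : ℕ → ℕ ⊕ K) y (.inl y) = Sum.inl by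
      funext w; by_cases h : w = y <;> simp [h]]
    rw [ih]
  | ex y A ih =>
    simp only [csubst]
    rw [show Function.update (Sum.inl : ℕ → ℕ ⊕ K) y (.inl y) = Sum.inl by
      funext w; by_cases h : w = y <;> simp [h]]
    rw [ih]

lemma csubstT_inr (σ : ℕ → ℕ ⊕ K) (c : K) : csubstT σ (.inr c) = .inr c := rfl

/-- Composition of simultaneous substitutions, assuming the inner one does not
get captured by binders of `A`. -/
lemma csubst_comp : ∀ (A : Fm K) (σ τ : ℕ → ℕ ⊕ K),
    (∀ w z, z ∈ vars A → τ w = .inl z → w = z) →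
    csubst σ (csubst τ A) = csubst (csubstT σ ∘ τ) A := by
  intro A
  induction A with
  | pred n ts =>
    intro σ τ _
    simp only [csubst, List.map_map]
    congr 1
    apply List.map_congr_left
    intro t _; cases t with
    | inl y => rfl
    | inr c => rfl
  | eq a b => intro σ τ _; cases a <;> cases b <;> rfl
  | neg A ih => intro σ τ h; simp only [csubst, vars] at *; rw [ih σ τ h]
  | conj A B ihA ihB =>
    intro σ τ h
    simp only [csubst]
    rw [ihA σ τ (fun w z hz => h w z (Or.inl hz)),
        ihB σ τ (fun w z hz => h w z (Or.inr hz))]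
  | disj A B ihA ihB =>
    intro σ τ h
    simp only [csubst]
    rw [ihA σ τ (fun w z hz => h w z (Or.inl hz)),
        ihB σ τ (fun w z hz => h w z (Or.inr hz))]
  | cl A ih => intro σ τ h; simp only [csubst, vars] at *; rw [ih σ τ h]
  | ncl A ih => intro σ τ h; simp only [csubst, vars] at *; rw [ih σ τ h]
  | all y A ih =>
    intro σ τ h
    simp only [csubst]
    rw [ih _ _ ?cond]
    case cond =>
      intro w z hz hτ
      by_cases hwy : w = y
      · subst hwy; simp only [Function.update_self] at hτ
        cases hτ; rfl
      · rw [Function.update_of_ne hwy] at hτ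
        exact h w z (by simp [vars, hz]) hτ
    have heq : csubstT (Function.update σ y (Sum.inl y)) ∘ Function.update τ y (Sum.inl y)
         = Function.update (csubstT σ ∘ τ) y (Sum.inl y) := by
      funext w
      by_cases hwy : w = y
      · subst hwy; simp [csubstT, Function.comp]
      · simp only [Function.comp, Function.update_of_ne hwy]
        cases hτw : τ w with
        | inl u =>
          by_cases huy : u = y
          · exact absurd (h w y (Set.mem_insert y _) (huy ▸ hτw)) hwy
          · simp [csubstT, Function.update_of_ne huy]
        | inr c => rfl
    rw [heq]
  | ex y A ih =>
    intro σ τ h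
    simp only [csubst]
    rw [ih _ _ ?cond]
    case cond =>
      intro w z hz hτ
      by_cases hwy : w = y
      · subst hwy; simp only [Function.update_self] at hτ
        cases hτ; rfl
      · rw [Function.update_of_ne hwy] at hτ
        exact h w z (by simp [vars, hz]) hτ
    have heq : csubstT (Function.update σ y (Sum.inl y)) ∘ Function.update τ y (Sum.inl y)
         = Function.update (csubstT σ ∘ τ) y (Sum.inl y) := by
      funext w
      by_cases hwy : w = y
      · subst hwy; simp [csubstT, Function.comp]
      · simp only [Function.comp, Function.update_of_ne hwy]
        cases hτw : τ w with
        | inl u =>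
          by_cases huy : u = y
          · exact absurd (h w y (Set.mem_insert y _) (huy ▸ hτw)) hwy
          · simp [csubstT, Function.update_of_ne huy]
        | inr c => rfl
    rw [heq]
lemma update_inl_self (y : ℕ) : Function.update (Sum.inl : ℕ → ℕ ⊕ K) y (.inl y) = Sum.inl := by
  funext w; by_cases h : w = y <;> simp [h]

lemma subst_eq_csubst : ∀ (A : Fm K) (x : ℕ) (t : ℕ ⊕ K),
    subst x t A = csubst (Function.update Sum.inl x t) A := by
  intro A
  induction A with
  | pred n ts =>
    intro x t
    simp only [subst, csubst]
    congr 1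
    apply List.map_congr_left
    intro a _
    cases a with
    | inl y =>
      by_cases h : y = x
      · subst h; simp [substT, csubstT]
      · simp [substT, csubstT, h, Function.update_of_ne h]
    | inr c => rfl
  | eq a b =>
    intro x t
    have hT : ∀ a : ℕ ⊕ K, substT x t a = csubstT (Function.update Sum.inl x t) a := by
      intro a
      cases a with
      | inl y =>
        by_cases h : y = x
        · subst h; simp [substT, csubstT]
        · simp [substT, csubstT, h, Function.update_of_ne h]
      | inr c => rfl
    simp only [subst, csubst, hT]
  | neg A ih => intro x t; simp only [subst, csubst, ih]
  | conj A B ihA ihB => intro x t; simp only [subst, csubst, ihA, ihB]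
  | disj A B ihA ihB => intro x t; simp only [subst, csubst, ihA, ihB]
  | cl A ih => intro x t; simp only [subst, csubst, ih]
  | ncl A ih => intro x t; simp only [subst, csubst, ih]
  | all y A ih =>
    intro x t
    by_cases h : y = x
    · subst h
      rw [show subst y t (Fm.all y A) = Fm.all y A from by simp [subst]]
      simp only [csubst]
      rw [Function.update_idem, update_inl_self, csubst_id]
    · simp only [subst, if_neg h, csubst, ih]
      rw [Function.update_comm (Ne.symm h), update_inl_self]
  | ex y A ih =>
    intro x t
    by_cases h : y = x
    · subst h
      rw [show subst y t (Fm.ex y A) = Fm.ex y A from by simp [subst]]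
      simp only [csubst]
      rw [Function.update_idem, update_inl_self, csubst_id]
    · simp only [subst, if_neg h, csubst, ih]
      rw [Function.update_comm (Ne.symm h), update_inl_self]

/-- Standard substitutions: every variable goes to itself or to a constant. -/
def Std (σ : ℕ → ℕ ⊕ K) : Prop := ∀ w, σ w = .inl w ∨ ∃ c, σ w = .inr c

lemma Std.update_inl {σ : ℕ → ℕ ⊕ K} (h : Std σ) (y : ℕ) :
    Std (Function.update σ y (.inl y)) := by
  intro w
  by_cases hw : w = y
  · subst hw; simp
  · rw [Function.update_of_ne hw]; exact h w

lemma Std.update_inr {σ : ℕ → ℕ ⊕ K} (h : Std σ) (y : ℕ) (c : K) :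
    Std (Function.update σ y (.inr c)) := by
  intro w
  by_cases hw : w = y
  · subst hw; simp
  · rw [Function.update_of_ne hw]; exact h w

lemma Std.cond {σ : ℕ → ℕ ⊕ K} (h : Std σ) (A : Fm K) :
    ∀ w z, z ∈ vars A → σ w = .inl z → w = z := by
  intro w z _ hσ
  rcases h w with h' | ⟨c, h'⟩
  · rw [h'] at hσ; cases hσ; rfl
  · rw [h'] at hσ; cases hσ

/-- Lemma A: pushing a constant substitution into a simultaneous substitution. -/
lemma csubst_subst_const (σ : ℕ → ℕ ⊕ K) (A : Fm K) (x : ℕ) (c : K) :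
    csubst σ (subst x (.inr c) A) = csubst (Function.update σ x (.inr c)) A := by
  rw [subst_eq_csubst, csubst_comp A σ _ ?_]
  · apply csubst_congr
    intro w _
    by_cases h : w = x
    · subst h; simp [Function.comp, csubstT]
    · simp [Function.comp, Function.update_of_ne h, csubstT]
  · intro w z _ hτ
    by_cases h : w = x
    · subst h; simp at hτ
    · rw [Function.update_of_ne h] at hτ; cases hτ; rfl

/-- Lemma B: substitution after a standard simultaneous substitution that is
the identity at `x`. -/
lemma subst_csubst (τ : ℕ → ℕ ⊕ K) (hτ : Std τ) (x : ℕ) (hx : τ x = .inl x)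
    (t : ℕ ⊕ K) (A : Fm K) :
    subst x t (csubst τ A) = csubst (Function.update τ x t) A := by
  rw [subst_eq_csubst, csubst_comp A _ τ (hτ.cond A)]
  apply csubst_congr
  intro w _
  by_cases h : w = x
  · subst h; simp [Function.comp, hx, csubstT]
  · simp only [Function.comp, Function.update_of_ne h]
    rcases hτ w with h' | ⟨c, h'⟩
    · rw [h']; simp [csubstT, Function.update_of_ne h]
    · rw [h']; rfl

lemma fv_csubst_subset : ∀ (A : Fm K) (σ : ℕ → ℕ ⊕ K),
    fv (csubst σ A) ⊆ {w | ∃ u ∈ fv A, σ u = .inl w} := by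
  intro A
  induction A with
  | pred n ts =>
    intro σ w hw
    simp only [csubst, fv, Set.mem_setOf_eq, List.mem_map] at hw
    obtain ⟨t, ht, hts⟩ := hw
    cases t with
    | inl u => exact ⟨u, ht, hts⟩
    | inr c => cases hts
  | eq a b =>
    intro σ w hw
    simp only [csubst, fv, Set.mem_setOf_eq] at hw
    rcases hw with hw | hw
    · cases a with
      | inl u => exact ⟨u, Or.inl rfl, hw⟩
      | inr c => cases hw
    · cases b with
      | inl u => exact ⟨u, Or.inr rfl, hw⟩
      | inr c => cases hw
  | neg A ih => intro σ; exact ih σ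
  | conj A B ihA ihB =>
    intro σ w hw
    rcases hw with hw | hw
    · obtain ⟨u, hu, h⟩ := ihA σ hw; exact ⟨u, Or.inl hu, h⟩
    · obtain ⟨u, hu, h⟩ := ihB σ hw; exact ⟨u, Or.inr hu, h⟩
  | disj A B ihA ihB =>
    intro σ w hw
    rcases hw with hw | hw
    · obtain ⟨u, hu, h⟩ := ihA σ hw; exact ⟨u, Or.inl hu, h⟩
    · obtain ⟨u, hu, h⟩ := ihB σ hw; exact ⟨u, Or.inr hu, h⟩
  | cl A ih => intro σ; exact ih σ
  | ncl A ih => intro σ; exact ih σ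
  | all y A ih =>
    intro σ w hw
    obtain ⟨hw1, hw2⟩ := hw
    obtain ⟨u, hu, h⟩ := ih _ hw1
    by_cases huy : u = y
    · subst huy; simp at h; exact absurd h.symm hw2
    · rw [Function.update_of_ne huy] at h
      exact ⟨u, ⟨hu, huy⟩, h⟩
  | ex y A ih =>
    intro σ w hw
    obtain ⟨hw1, hw2⟩ := hw
    obtain ⟨u, hu, h⟩ := ih _ hw1
    by_cases huy : u = y
    · subst huy; simp at h; exact absurd h.symm hw2
    · rw [Function.update_of_ne huy] at h
      exact ⟨u, ⟨hu, huy⟩, h⟩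

lemma vars_csubst_subset : ∀ (A : Fm K) (σ : ℕ → ℕ ⊕ K),
    vars (csubst σ A) ⊆ vars A ∪ {w | ∃ u ∈ fv A, σ u = .inl w} := by
  intro A
  induction A with
  | pred n ts =>
    intro σ w hw
    simp only [csubst, vars, Set.mem_setOf_eq, List.mem_map] at hw
    obtain ⟨t, ht, hts⟩ := hw
    cases t with
    | inl u => exact Or.inr ⟨u, ht, hts⟩
    | inr c => cases hts
  | eq a b =>
    intro σ w hw
    simp only [csubst, vars, Set.mem_setOf_eq] at hw
    rcases hw with hw | hw
    · cases a with
      | inl u => exact Or.inr ⟨u, Or.inl rfl, hw⟩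
      | inr c => cases hw
    · cases b with
      | inl u => exact Or.inr ⟨u, Or.inr rfl, hw⟩
      | inr c => cases hw
  | neg A ih => intro σ; exact ih σ
  | conj A B ihA ihB =>
    intro σ w hw
    rcases hw with hw | hw
    · rcases ihA σ hw with h | ⟨u, hu, h⟩
      · exact Or.inl (Or.inl h)
      · exact Or.inr ⟨u, Or.inl hu, h⟩
    · rcases ihB σ hw with h | ⟨u, hu, h⟩
      · exact Or.inl (Or.inr h)
      · exact Or.inr ⟨u, Or.inr hu, h⟩
  | disj A B ihA ihB =>
    intro σ w hw
    rcases hw with hw | hw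
    · rcases ihA σ hw with h | ⟨u, hu, h⟩
      · exact Or.inl (Or.inl h)
      · exact Or.inr ⟨u, Or.inl hu, h⟩
    · rcases ihB σ hw with h | ⟨u, hu, h⟩
      · exact Or.inl (Or.inr h)
      · exact Or.inr ⟨u, Or.inr hu, h⟩
  | cl A ih => intro σ; exact ih σ
  | ncl A ih => intro σ; exact ih σ
  | all y A ih =>
    intro σ w hw
    simp only [csubst, vars, Set.mem_insert_iff] at hw ⊢
    rcases hw with rfl | hw
    · exact Or.inl (Or.inl rfl)
    · rcases ih _ hw with h | ⟨u, hu, h⟩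
      · exact Or.inl (Or.inr h)
      · by_cases huy : u = y
        · subst huy; simp at h; exact Or.inl (Or.inl h.symm)
        · rw [Function.update_of_ne huy] at h
          exact Or.inr ⟨u, ⟨hu, huy⟩, h⟩
  | ex y A ih =>
    intro σ w hw
    simp only [csubst, vars, Set.mem_insert_iff] at hw ⊢
    rcases hw with rfl | hw
    · exact Or.inl (Or.inl rfl)
    · rcases ih _ hw with h | ⟨u, hu, h⟩
      · exact Or.inl (Or.inr h)
      · by_cases huy : u = y
        · subst huy; simp at h; exact Or.inl (Or.inl h.symm)
        · rw [Function.update_of_ne huy] at h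
          exact Or.inr ⟨u, ⟨hu, huy⟩, h⟩
lemma vars_of_fv : ∀ {A : Fm K} {y : ℕ}, y ∈ fv A → y ∈ vars A := by
  intro A
  induction A with
  | pred n ts => intro y h; exact h
  | eq a b => intro y h; exact h
  | neg A ih => exact fun h => ih h
  | conj A B ihA ihB =>
    intro y h
    rcases h with h | h
    · exact Or.inl (ihA h)
    · exact Or.inr (ihB h)
  | disj A B ihA ihB =>
    intro y h
    rcases h with h | h
    · exact Or.inl (ihA h)
    · exact Or.inr (ihB h)
  | cl A ih => exact fun h => ih h
  | ncl A ih => exact fun h => ih h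
  | all z A ih => intro y h; exact Set.mem_insert_iff.mpr (Or.inr (ih h.1))
  | ex z A ih => intro y h; exact Set.mem_insert_iff.mpr (Or.inr (ih h.1))
variable {K' : Type}

lemma sumMap_inl_iff (f : K → K') (t : ℕ ⊕ K) (y : ℕ) :
    Sum.map id f t = .inl y ↔ t = .inl y := by
  cases t <;> simp

lemma fv_map (f : K → K') : ∀ A : Fm K, fv (Fm.map f A) = fv A := by
  intro A
  induction A with
  | pred n ts =>
    ext y
    simp only [Fm.map, fv, Set.mem_setOf_eq, List.mem_map]
    constructor
    · rintro ⟨t, ht, hts⟩; rw [sumMap_inl_iff] at hts; exact hts ▸ ht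
    · intro h; exact ⟨.inl y, h, rfl⟩
  | eq a b =>
    ext y
    simp only [Fm.map, fv, Set.mem_setOf_eq, sumMap_inl_iff]
  | neg A ih => exact ih
  | conj A B ihA ihB => simp only [Fm.map, fv, ihA, ihB]
  | disj A B ihA ihB => simp only [Fm.map, fv, ihA, ihB]
  | cl A ih => exact ih
  | ncl A ih => exact ih
  | all y A ih => simp only [Fm.map, fv, ih]
  | ex y A ih => simp only [Fm.map, fv, ih]

lemma vars_map (f : K → K') : ∀ A : Fm K, vars (Fm.map f A) = vars A := by
  intro A
  induction A with
  | pred n ts =>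
    ext y
    simp only [Fm.map, vars, Set.mem_setOf_eq, List.mem_map]
    constructor
    · rintro ⟨t, ht, hts⟩; rw [sumMap_inl_iff] at hts; exact hts ▸ ht
    · intro h; exact ⟨.inl y, h, rfl⟩
  | eq a b =>
    ext y
    simp only [Fm.map, vars, Set.mem_setOf_eq, sumMap_inl_iff]
  | neg A ih => exact ih
  | conj A B ihA ihB => simp only [Fm.map, vars, ihA, ihB]
  | disj A B ihA ihB => simp only [Fm.map, vars, ihA, ihB]
  | cl A ih => exact ih
  | ncl A ih => exact ih
  | all y A ih => simp only [Fm.map, vars, ih]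
  | ex y A ih => simp only [Fm.map, vars, ih]

lemma map_substT (f : K → K') (x : ℕ) (t a : ℕ ⊕ K) :
    Sum.map id f (substT x t a) = substT x (Sum.map id f t) (Sum.map id f a) := by
  cases a with
  | inl y => by_cases h : y = x <;> simp [substT, h]
  | inr c => rfl

lemma map_subst (f : K → K') : ∀ (A : Fm K) (x : ℕ) (t : ℕ ⊕ K),
    Fm.map f (subst x t A) = subst x (Sum.map id f t) (Fm.map f A) := by
  intro A
  induction A with
  | pred n ts =>
    intro x t
    simp only [subst, Fm.map, List.map_map]
    congr 1
    apply List.map_congr_left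
    intro a _
    exact map_substT f x t a
  | eq a b => intro x t; simp only [subst, Fm.map, map_substT]
  | neg A ih => intro x t; simp only [subst, Fm.map, ih]
  | conj A B ihA ihB => intro x t; simp only [subst, Fm.map, ihA, ihB]
  | disj A B ihA ihB => intro x t; simp only [subst, Fm.map, ihA, ihB]
  | cl A ih => intro x t; simp only [subst, Fm.map, ih]
  | ncl A ih => intro x t; simp only [subst, Fm.map, ih]
  | all y A ih =>
    intro x t
    by_cases h : y = x
    · subst h; simp [subst, Fm.map]
    · simp [subst, Fm.map, h, ih]
  | ex y A ih =>
    intro x t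
    by_cases h : y = x
    · subst h; simp [subst, Fm.map]
    · simp [subst, Fm.map, h, ih]

lemma Alpha.map (f : K → K') : ∀ {A B : Fm K}, Alpha A B → Alpha (Fm.map f A) (Fm.map f B) := by
  intro A B h
  induction h with
  | refl A => exact Alpha.refl _
  | symm _ ih => exact ih.symm
  | trans _ _ ih1 ih2 => exact ih1.trans ih2
  | negC _ ih => exact ih.negC
  | conjC _ _ ih1 ih2 => exact ih1.conjC ih2
  | disjC _ _ ih1 ih2 => exact ih1.disjC ih2
  | clC _ ih => exact ih.clC
  | nclC _ ih => exact ih.nclC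
  | allC _ ih => exact ih.allC
  | exC _ ih => exact ih.exC
  | allR x y A hy =>
    have := Alpha.allR (K := K') x y (Fm.map f A) (by rw [vars_map]; exact hy)
    rwa [show subst x (Sum.inl y) (Fm.map f A) = Fm.map f (subst x (Sum.inl y) A) from
      (map_subst f A x (Sum.inl y)).symm] at this
  | exR x y A hy =>
    have := Alpha.exR (K := K') x y (Fm.map f A) (by rw [vars_map]; exact hy)
    rwa [show subst x (Sum.inl y) (Fm.map f A) = Fm.map f (subst x (Sum.inl y) A) from
      (map_subst f A x (Sum.inl y)).symm] at this

lemma cOcc_map_ne {f g : K → K'} : ∀ (A : Fm K) (c : K), ¬ cOcc c A →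
    (∀ k, k ≠ c → f k = g k) → Fm.map f A = Fm.map g A := by
  intro A
  induction A with
  | pred n ts =>
    intro c hc hfg
    simp only [Fm.map]
    congr 1
    apply List.map_congr_left
    intro t ht
    cases t with
    | inl y => rfl
    | inr k =>
      have : k ≠ c := fun he => hc (by simpa [cOcc, he] using ht)
      simp [hfg k this]
  | eq a b =>
    intro c hc hfg
    simp only [Fm.map]
    congr 1
    · cases a with
      | inl y => rfl
      | inr k =>
        have : k ≠ c := fun he => hc (Or.inl (by rw [he]))
        simp [hfg k this]
    · cases b with
      | inl y => rfl
      | inr k =>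
        have : k ≠ c := fun he => hc (Or.inr (by rw [he]))
        simp [hfg k this]
  | neg A ih => intro c hc hfg; simp only [Fm.map]; rw [ih c hc hfg]
  | conj A B ihA ihB =>
    intro c hc hfg
    simp only [Fm.map]
    rw [ihA c (fun h => hc (Or.inl h)) hfg, ihB c (fun h => hc (Or.inr h)) hfg]
  | disj A B ihA ihB =>
    intro c hc hfg
    simp only [Fm.map]
    rw [ihA c (fun h => hc (Or.inl h)) hfg, ihB c (fun h => hc (Or.inr h)) hfg]
  | cl A ih => intro c hc hfg; simp only [Fm.map]; rw [ih c hc hfg]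
  | ncl A ih => intro c hc hfg; simp only [Fm.map]; rw [ih c hc hfg]
  | all y A ih => intro c hc hfg; simp only [Fm.map]; rw [ih c hc hfg]
  | ex y A ih => intro c hc hfg; simp only [Fm.map]; rw [ih c hc hfg]

/-- Alpha variance is preserved by standard simultaneous substitutions. -/
lemma alpha_csubst : ∀ {A B : Fm K}, Alpha A B → ∀ σ : ℕ → ℕ ⊕ K, Std σ →
    Alpha (csubst σ A) (csubst σ B) := by
  intro A B h
  induction h with
  | refl A => intro σ _; exact Alpha.refl _
  | symm _ ih => intro σ hσ; exact (ih σ hσ).symm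
  | trans _ _ ih1 ih2 => intro σ hσ; exact (ih1 σ hσ).trans (ih2 σ hσ)
  | negC _ ih => intro σ hσ; exact (ih σ hσ).negC
  | conjC _ _ ih1 ih2 => intro σ hσ; exact (ih1 σ hσ).conjC (ih2 σ hσ)
  | disjC _ _ ih1 ih2 => intro σ hσ; exact (ih1 σ hσ).disjC (ih2 σ hσ)
  | clC _ ih => intro σ hσ; exact (ih σ hσ).clC
  | nclC _ ih => intro σ hσ; exact (ih σ hσ).nclC
  | allC _ ih => intro σ hσ; exact (ih _ (hσ.update_inl _)).allC
  | exC _ ih => intro σ hσ; exact (ih _ (hσ.update_inl _)).exC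
  | allR x y A hy =>
    intro σ hσ
    by_cases hxy : y = x
    · subst hxy
      have hyfv : y ∉ fv A := fun h => hy (vars_of_fv h)
      rw [show subst y (Sum.inl y) A = A from by
        rw [subst_eq_csubst, update_inl_self, csubst_id]]
      exact Alpha.refl _
    · -- main case
      have hyfv : y ∉ fv A := fun h => hy (vars_of_fv h)
      have hN2 : csubst (Function.update σ y (.inl y)) (subst x (.inl y) A)
          = csubst (Function.update σ x (.inl y)) A := by
        rw [subst_eq_csubst, csubst_comp A _ _ ?cond]
        case cond =>
          intro w z hz hτ
          by_cases hw : w = x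
          · subst hw; simp at hτ; exact absurd (hτ ▸ hz) hy
          · rw [Function.update_of_ne hw] at hτ; cases hτ; rfl
        apply csubst_congr
        intro w hw
        by_cases hw' : w = x
        · subst hw'; simp [Function.comp, csubstT]
        · simp only [Function.comp, Function.update_of_ne hw', csubstT,
            Function.update_of_ne (show w ≠ y from fun he => hyfv (he ▸ hw))]
      have hsub : subst x (.inl y) (csubst (Function.update σ x (.inl x)) A)
          = csubst (Function.update σ x (.inl y)) A := by
        rw [subst_csubst _ (hσ.update_inl x) x (by simp), Function.update_idem]
      have hfresh : y ∉ vars (csubst (Function.update σ x (.inl x)) A) := by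
        intro hmem
        rcases vars_csubst_subset A _ hmem with h | ⟨u, hu, h⟩
        · exact hy h
        · by_cases hux : u = x
          · subst hux; simp at h; exact hxy h.symm
          · rw [Function.update_of_ne hux] at h
            rcases hσ u with h' | ⟨c, h'⟩
            · rw [h'] at h; cases h; exact hyfv hu
            · rw [h'] at h; cases h
      simp only [csubst]
      have := Alpha.allR x y (csubst (Function.update σ x (.inl x)) A) hfresh
      rwa [hsub, hN2.symm] at this
  | exR x y A hy =>
    intro σ hσ
    by_cases hxy : y = x
    · subst hxy
      have hyfv : y ∉ fv A := fun h => hy (vars_of_fv h)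
      rw [show subst y (Sum.inl y) A = A from by
        rw [subst_eq_csubst, update_inl_self, csubst_id]]
      exact Alpha.refl _
    · have hyfv : y ∉ fv A := fun h => hy (vars_of_fv h)
      have hN2 : csubst (Function.update σ y (.inl y)) (subst x (.inl y) A)
          = csubst (Function.update σ x (.inl y)) A := by
        rw [subst_eq_csubst, csubst_comp A _ _ ?cond]
        case cond =>
          intro w z hz hτ
          by_cases hw : w = x
          · subst hw; simp at hτ; exact absurd (hτ ▸ hz) hy
          · rw [Function.update_of_ne hw] at hτ; cases hτ; rfl
        apply csubst_congr
        intro w hw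
        by_cases hw' : w = x
        · subst hw'; simp [Function.comp, csubstT]
        · simp only [Function.comp, Function.update_of_ne hw', csubstT,
            Function.update_of_ne (show w ≠ y from fun he => hyfv (he ▸ hw))]
      have hsub : subst x (.inl y) (csubst (Function.update σ x (.inl x)) A)
          = csubst (Function.update σ x (.inl y)) A := by
        rw [subst_csubst _ (hσ.update_inl x) x (by simp), Function.update_idem]
      have hfresh : y ∉ vars (csubst (Function.update σ x (.inl x)) A) := by
        intro hmem
        rcases vars_csubst_subset A _ hmem with h | ⟨u, hu, h⟩
        · exact hy h
        · by_cases hux : u = x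
          · subst hux; simp at h; exact hxy h.symm
          · rw [Function.update_of_ne hux] at h
            rcases hσ u with h' | ⟨c, h'⟩
            · rw [h'] at h; cases h; exact hyfv hu
            · rw [h'] at h; cases h
      simp only [csubst]
      have := Alpha.exR x y (csubst (Function.update σ x (.inl x)) A) hfresh
      rwa [hsub, hN2.symm] at this
lemma beq_of_iff {a b : Bool} (h : (a = true) ↔ (b = true)) : a = b := by
  cases a <;> cases b <;> simp_all

def sz : Fm K → ℕ
  | .pred _ _ => 0
  | .eq _ _   => 0
  | .neg A    => sz A + 1
  | .conj A B => sz A + sz B + 1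
  | .disj A B => sz A + sz B + 1
  | .cl A     => sz A + 1
  | .ncl A    => sz A + 1
  | .all _ A  => sz A + 1
  | .ex _ A   => sz A + 1

lemma sz_subst : ∀ (A : Fm K) (x : ℕ) (t : ℕ ⊕ K), sz (subst x t A) = sz A := by
  intro A
  induction A with
  | pred n ts => intro x t; rfl
  | eq a b => intro x t; rfl
  | neg A ih => intro x t; simp [subst, sz, ih]
  | conj A B ihA ihB => intro x t; simp [subst, sz, ihA, ihB]
  | disj A B ihA ihB => intro x t; simp [subst, sz, ihA, ihB]
  | cl A ih => intro x t; simp [subst, sz, ih]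
  | ncl A ih => intro x t; simp [subst, sz, ih]
  | all y A ih =>
    intro x t
    by_cases h : y = x
    · simp [subst, h]
    · simp [subst, h, sz, ih]
  | ex y A ih =>
    intro x t
    by_cases h : y = x
    · simp [subst, h]
    · simp [subst, h, sz, ih]

lemma fv_subst_subset (A : Fm K) (x : ℕ) (c : K) :
    fv (subst x (.inr c) A) ⊆ fv A \ {x} := by
  rw [subst_eq_csubst]
  intro w hw
  obtain ⟨u, hu, h⟩ := fv_csubst_subset A _ hw
  by_cases hux : u = x
  · subst hux; simp at h
  · rw [Function.update_of_ne hux] at h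
    cases h
    exact ⟨hu, hux⟩

lemma closed_subst {A : Fm K} {x : ℕ} (hA : fv A ⊆ {x}) (c : K) :
    Closed (subst x (.inr c) A) := by
  rw [Closed, Set.eq_empty_iff_forall_notMem]
  intro w hw
  obtain ⟨hw1, hw2⟩ := fv_subst_subset A x c hw
  exact hw2 (hA hw1)

lemma subst_comm_const {x y : ℕ} (hxy : y ≠ x) (c d : K) (A : Fm K) :
    subst y (.inr d) (subst x (.inr c) A) = subst x (.inr c) (subst y (.inr d) A) := by
  rw [subst_eq_csubst (subst x (.inr c) A) y, subst_eq_csubst (subst y (.inr d) A) x,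
    csubst_subst_const, csubst_subst_const, Function.update_comm hxy]

variable {C D : Type}

lemma subst_invariance {S : Struc C D} {v : Fm (C ⊕ D) → Bool} (hv : IsVal S v)
    (x : ℕ) (c₁ c₂ : C ⊕ D) (hden : den S c₁ = den S c₂) :
    ∀ (N : ℕ) (A : Fm (C ⊕ D)), sz A < N → fv A ⊆ {x} →
      v (subst x (.inr c₁) A) = v (subst x (.inr c₂) A) := by
  intro N
  induction N with
  | zero => intro A h; omega
  | succ N ih =>
    intro A hsz hfv
    cases A with
    | pred n ts =>
      have hshape : ∀ c : C ⊕ D, ts.map (substT x (.inr c)) =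
          (ts.map (fun t => match t with | .inl _ => c | .inr k => k)).map Sum.inr := by
        intro c
        rw [List.map_map]
        apply List.map_congr_left
        intro t ht
        cases t with
        | inl u =>
          have : u = x := hfv ht
          simp [substT, this]
        | inr k => rfl
      have hden2 : (ts.map (fun t => match t with | .inl _ => c₁ | .inr k => k)).map (den S)
          = (ts.map (fun t => match t with | .inl _ => c₂ | .inr k => k)).map (den S) := by
        rw [List.map_map, List.map_map]
        apply List.map_congr_left
        intro t _
        cases t with
        | inl u => exact hden
        | inr k => rfl
      apply beq_of_iff
      show v (.pred n (ts.map (substT x (.inr c₁)))) = true ↔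
        v (.pred n (ts.map (substT x (.inr c₂)))) = true
      rw [hshape c₁, hshape c₂, hv.atom, hv.atom, hden2]
    | eq a b =>
      have ha : a = .inl x ∨ ∃ k, a = .inr k := by
        cases a with
        | inl u => exact Or.inl (by rw [hfv (Or.inl rfl)])
        | inr k => exact Or.inr ⟨k, rfl⟩
      have hb : b = .inl x ∨ ∃ k, b = .inr k := by
        cases b with
        | inl u => exact Or.inl (by rw [hfv (Or.inr rfl)])
        | inr k => exact Or.inr ⟨k, rfl⟩
      have key : ∀ (t : ℕ ⊕ (C ⊕ D)), t = .inl x ∨ (∃ k, t = .inr k) →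
          ∃ e₁ e₂ : C ⊕ D, substT x (.inr c₁) t = .inr e₁ ∧ substT x (.inr c₂) t = .inr e₂ ∧
            den S e₁ = den S e₂ := by
        rintro t (rfl | ⟨k, rfl⟩)
        · exact ⟨c₁, c₂, by simp [substT], by simp [substT], hden⟩
        · exact ⟨k, k, rfl, rfl, rfl⟩
      obtain ⟨a₁, a₂, ha1, ha2, hda⟩ := key a ha
      obtain ⟨b₁, b₂, hb1, hb2, hdb⟩ := key b hb
      apply beq_of_iff
      show v (.eq (substT x (.inr c₁) a) (substT x (.inr c₁) b)) = true ↔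
        v (.eq (substT x (.inr c₂) a) (substT x (.inr c₂) b)) = true
      rw [ha1, hb1, ha2, hb2, hv.eqP, hv.eqP, hda, hdb]
    | neg B =>
      have hszB : sz B < N := by simp [sz] at hsz; omega
      exact (hv.substC x B hfv c₁ c₂ hden (ih B hszB hfv)).1
    | conj B B' =>
      simp only [sz] at hsz
      have h1 := ih B (by omega) (fun w hw => hfv (Or.inl hw))
      have h2 := ih B' (by omega) (fun w hw => hfv (Or.inr hw))
      apply beq_of_iff
      show v (.conj (subst x (.inr c₁) B) (subst x (.inr c₁) B')) = true ↔
        v (.conj (subst x (.inr c₂) B) (subst x (.inr c₂) B')) = true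
      rw [hv.andC _ _ (closed_subst (fun w hw => hfv (Or.inl hw)) c₁)
            (closed_subst (fun w hw => hfv (Or.inr hw)) c₁),
          hv.andC _ _ (closed_subst (fun w hw => hfv (Or.inl hw)) c₂)
            (closed_subst (fun w hw => hfv (Or.inr hw)) c₂), h1, h2]
    | disj B B' =>
      simp only [sz] at hsz
      have h1 := ih B (by omega) (fun w hw => hfv (Or.inl hw))
      have h2 := ih B' (by omega) (fun w hw => hfv (Or.inr hw))
      apply beq_of_iff
      show v (.disj (subst x (.inr c₁) B) (subst x (.inr c₁) B')) = true ↔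
        v (.disj (subst x (.inr c₂) B) (subst x (.inr c₂) B')) = true
      rw [hv.orC _ _ (closed_subst (fun w hw => hfv (Or.inl hw)) c₁)
            (closed_subst (fun w hw => hfv (Or.inr hw)) c₁),
          hv.orC _ _ (closed_subst (fun w hw => hfv (Or.inl hw)) c₂)
            (closed_subst (fun w hw => hfv (Or.inr hw)) c₂), h1, h2]
    | cl B =>
      have hszB : sz B < N := by simp [sz] at hsz; omega
      exact (hv.substC x B hfv c₁ c₂ hden (ih B hszB hfv)).2.1
    | ncl B =>
      have hszB : sz B < N := by simp [sz] at hsz; omega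
      exact (hv.substC x B hfv c₁ c₂ hden (ih B hszB hfv)).2.2
    | all y B =>
      by_cases hxy : y = x
      · subst hxy; simp [subst]
      · simp only [sz] at hsz
        have hfvB : ∀ c : C ⊕ D, fv (subst x (.inr c) B) ⊆ {y} := by
          intro c w hw
          obtain ⟨hw1, hw2⟩ := fv_subst_subset B x c hw
          by_cases hwy : w = y
          · exact hwy
          · exact absurd (hfv ⟨hw1, hwy⟩) hw2
        have hall : ∀ c : C ⊕ D, subst x (.inr c) (Fm.all y B) = .all y (subst x (.inr c) B) :=
          fun c => by simp [subst, hxy]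
        rw [hall c₁, hall c₂]
        apply beq_of_iff
        rw [hv.allC y _ (hfvB c₁), hv.allC y _ (hfvB c₂)]
        constructor
        · intro h d
          have := h d
          rw [subst_comm_const hxy] at this ⊢
          rw [← ih (subst y (.inr (.inr d)) B) (by rw [sz_subst]; omega) ?fvcond]
          exact this
          case fvcond =>
            intro w hw
            obtain ⟨hw1, hw2⟩ := fv_subst_subset B y (.inr d) hw
            exact hfv ⟨hw1, hw2⟩
        · intro h d
          have := h d
          rw [subst_comm_const hxy] at this ⊢
          rw [ih (subst y (.inr (.inr d)) B) (by rw [sz_subst]; omega) ?fvcond]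
          exact this
          case fvcond =>
            intro w hw
            obtain ⟨hw1, hw2⟩ := fv_subst_subset B y (.inr d) hw
            exact hfv ⟨hw1, hw2⟩
    | ex y B =>
      by_cases hxy : y = x
      · subst hxy; simp [subst]
      · simp only [sz] at hsz
        have hfvB : ∀ c : C ⊕ D, fv (subst x (.inr c) B) ⊆ {y} := by
          intro c w hw
          obtain ⟨hw1, hw2⟩ := fv_subst_subset B x c hw
          by_cases hwy : w = y
          · exact hwy
          · exact absurd (hfv ⟨hw1, hwy⟩) hw2
        have hall : ∀ c : C ⊕ D, subst x (.inr c) (Fm.ex y B) = .ex y (subst x (.inr c) B) :=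
          fun c => by simp [subst, hxy]
        rw [hall c₁, hall c₂]
        apply beq_of_iff
        rw [hv.exC y _ (hfvB c₁), hv.exC y _ (hfvB c₂)]
        constructor
        · rintro ⟨d, hd⟩
          refine ⟨d, ?_⟩
          rw [subst_comm_const hxy] at hd ⊢
          rw [← ih (subst y (.inr (.inr d)) B) (by rw [sz_subst]; omega) ?fvcond]
          exact hd
          case fvcond =>
            intro w hw
            obtain ⟨hw1, hw2⟩ := fv_subst_subset B y (.inr d) hw
            exact hfv ⟨hw1, hw2⟩
        · rintro ⟨d, hd⟩
          refine ⟨d, ?_⟩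
          rw [subst_comm_const hxy] at hd ⊢
          rw [ih (subst y (.inr (.inr d)) B) (by rw [sz_subst]; omega) ?fvcond]
          exact hd
          case fvcond =>
            intro w hw
            obtain ⟨hw1, hw2⟩ := fv_subst_subset B y (.inr d) hw
            exact hfv ⟨hw1, hw2⟩
/-- The closing substitution induced by an assignment of constants to variables. -/
def sig (σ : ℕ → C ⊕ D) : ℕ → ℕ ⊕ (C ⊕ D) := fun z => .inr (σ z)

lemma std_sig (σ : ℕ → C ⊕ D) : Std (sig σ) := fun w => Or.inr ⟨σ w, rfl⟩

lemma closed_csubst_sig (σ : ℕ → C ⊕ D) (M : Fm (C ⊕ D)) : Closed (csubst (sig σ) M) := by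
  rw [Closed, Set.eq_empty_iff_forall_notMem]
  intro w hw
  obtain ⟨u, _, h⟩ := fv_csubst_subset M _ hw
  cases h

lemma fv_qN (σ : ℕ → C ⊕ D) (x : ℕ) (M : Fm (C ⊕ D)) :
    fv (csubst (Function.update (sig σ) x (.inl x)) M) ⊆ {x} := by
  intro w hw
  obtain ⟨u, _, h⟩ := fv_csubst_subset M _ hw
  by_cases hux : u = x
  · subst hux; simp at h; exact h.symm
  · rw [Function.update_of_ne hux] at h; cases h

lemma closed_all_qN (σ : ℕ → C ⊕ D) (x : ℕ) (M : Fm (C ⊕ D)) :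
    Closed (Fm.all x (csubst (Function.update (sig σ) x (.inl x)) M)) := by
  rw [Closed, Set.eq_empty_iff_forall_notMem]
  intro w hw
  exact hw.2 (fv_qN σ x M hw.1)

lemma closed_ex_qN (σ : ℕ → C ⊕ D) (x : ℕ) (M : Fm (C ⊕ D)) :
    Closed (Fm.ex x (csubst (Function.update (sig σ) x (.inl x)) M)) := by
  rw [Closed, Set.eq_empty_iff_forall_notMem]
  intro w hw
  exact hw.2 (fv_qN σ x M hw.1)

lemma inst_qN (σ : ℕ → C ⊕ D) (x : ℕ) (M : Fm (C ⊕ D)) (t : C ⊕ D) :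
    subst x (.inr t) (csubst (Function.update (sig σ) x (.inl x)) M)
      = csubst (Function.update (sig σ) x (.inr t)) M := by
  rw [subst_csubst _ ((std_sig σ).update_inl x) x (by simp), Function.update_idem]

lemma map_subst_const {C : Type} (f : C → C ⊕ D) (A : Fm C) (x : ℕ) (c : C) :
    Fm.map f (subst x (.inr c) A) = subst x (.inr (f c)) (Fm.map f A) :=
  map_subst f A x (.inr c)

/-- Evaluating an instance at a constant agrees with evaluating at the diagram
constant of its denotation. -/
lemma conv_den {S : Struc C D} {v : Fm (C ⊕ D) → Bool} (hv : IsVal S v)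
    (x : ℕ) (M : Fm (C ⊕ D)) (hfv : fv M ⊆ {x}) (t : C ⊕ D) :
    v (subst x (.inr t) M) = v (subst x (.inr (.inr (den S t))) M) :=
  subst_invariance hv x t (.inr (den S t)) rfl (sz M + 1) M (Nat.lt_succ_self _) hfv

lemma conv_den_neg {S : Struc C D} {v : Fm (C ⊕ D) → Bool} (hv : IsVal S v)
    (x : ℕ) (M : Fm (C ⊕ D)) (hfv : fv M ⊆ {x}) (t : C ⊕ D) :
    v (.neg (subst x (.inr t) M)) = v (.neg (subst x (.inr (.inr (den S t))) M)) :=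
  (hv.substC x M hfv t (.inr (den S t)) rfl (conv_den hv x M hfv t)).1

lemma map_update_eq {C : Type} (f : C → C ⊕ D) (c : C) (t : C ⊕ D) (A : Fm C)
    (hc : ¬ cOcc c A) : Fm.map (Function.update f c t) A = Fm.map f A :=
  cOcc_map_ne A c hc (fun k hk => Function.update_of_ne hk _ _)

lemma closed_neg {M : Fm K} (h : Closed M) : Closed (Fm.neg M) := h
lemma closed_cl {M : Fm K} (h : Closed M) : Closed (Fm.cl M) := h
lemma closed_ncl {M : Fm K} (h : Closed M) : Closed (Fm.ncl M) := h

lemma closed_csubst_update_sig (σ : ℕ → C ⊕ D) (x : ℕ) (t : C ⊕ D) (M : Fm (C ⊕ D)) :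
    Closed (csubst (Function.update (sig σ) x (.inr t)) M) := by
  rw [Closed, Set.eq_empty_iff_forall_notMem]
  intro w hw
  obtain ⟨u, _, h⟩ := fv_csubst_subset M _ hw
  by_cases hux : u = x
  · subst hux; simp at h
  · rw [Function.update_of_ne hux] at h; cases h

theorem main_sound {S : Struc C D} {v : Fm (C ⊕ D) → Bool} (hv : IsVal S v)
    {Γ : Set (Fm C)} {A : Fm C} (h : Deriv Γ A) :
    ∀ (f : C → C ⊕ D) (σ : ℕ → C ⊕ D),
      (∀ G ∈ Γ, v (csubst (sig σ) (Fm.map f G)) = true) →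
      v (csubst (sig σ) (Fm.map f A)) = true := by
  induction h with
  | hyp hmem => exact fun f σ hsat => hsat _ hmem
  | andI h1 h2 ih1 ih2 =>
    intro f σ hs
    simp only [Fm.map, csubst]
    exact (hv.andC _ _ (closed_csubst_sig _ _) (closed_csubst_sig _ _)).mpr
      ⟨ih1 f σ hs, ih2 f σ hs⟩
  | andE1 h ih =>
    intro f σ hs
    have hc := ih f σ hs
    simp only [Fm.map, csubst] at hc
    exact ((hv.andC _ _ (closed_csubst_sig _ _) (closed_csubst_sig _ _)).mp hc).1
  | andE2 h ih =>
    intro f σ hs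
    have hc := ih f σ hs
    simp only [Fm.map, csubst] at hc
    exact ((hv.andC _ _ (closed_csubst_sig _ _) (closed_csubst_sig _ _)).mp hc).2
  | orI1 h ih =>
    intro f σ hs
    simp only [Fm.map, csubst]
    exact (hv.orC _ _ (closed_csubst_sig _ _) (closed_csubst_sig _ _)).mpr
      (Or.inl (ih f σ hs))
  | orI2 h ih =>
    intro f σ hs
    simp only [Fm.map, csubst]
    exact (hv.orC _ _ (closed_csubst_sig _ _) (closed_csubst_sig _ _)).mpr
      (Or.inr (ih f σ hs))
  | orE h h1 h2 ih ih1 ih2 =>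
    intro f σ hs
    have hd := ih f σ hs
    simp only [Fm.map, csubst] at hd
    rcases (hv.orC _ _ (closed_csubst_sig _ _) (closed_csubst_sig _ _)).mp hd with hx | hx
    · refine ih1 f σ ?_
      intro G hG
      rcases Set.mem_insert_iff.mp hG with rfl | hG'
      · exact hx
      · exact hs G hG'
    · refine ih2 f σ ?_
      intro G hG
      rcases Set.mem_insert_iff.mp hG with rfl | hG'
      · exact hx
      · exact hs G hG'
  | negAndI1 h ih =>
    intro f σ hs
    have hc := ih f σ hs
    simp only [Fm.map, csubst] at hc ⊢
    exact (hv.nandC _ _ (closed_csubst_sig _ _) (closed_csubst_sig _ _)).mpr (Or.inl hc)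
  | negAndI2 h ih =>
    intro f σ hs
    have hc := ih f σ hs
    simp only [Fm.map, csubst] at hc ⊢
    exact (hv.nandC _ _ (closed_csubst_sig _ _) (closed_csubst_sig _ _)).mpr (Or.inr hc)
  | negAndE h h1 h2 ih ih1 ih2 =>
    intro f σ hs
    have hd := ih f σ hs
    simp only [Fm.map, csubst] at hd
    rcases (hv.nandC _ _ (closed_csubst_sig _ _) (closed_csubst_sig _ _)).mp hd with hx | hx
    · refine ih1 f σ ?_
      intro G hG
      rcases Set.mem_insert_iff.mp hG with rfl | hG'
      · simpa only [Fm.map, csubst] using hx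
      · exact hs G hG'
    · refine ih2 f σ ?_
      intro G hG
      rcases Set.mem_insert_iff.mp hG with rfl | hG'
      · simpa only [Fm.map, csubst] using hx
      · exact hs G hG'
  | negOrI h1 h2 ih1 ih2 =>
    intro f σ hs
    have hc1 := ih1 f σ hs
    have hc2 := ih2 f σ hs
    simp only [Fm.map, csubst] at hc1 hc2 ⊢
    exact (hv.norC _ _ (closed_csubst_sig _ _) (closed_csubst_sig _ _)).mpr ⟨hc1, hc2⟩
  | negOrE1 h ih =>
    intro f σ hs
    have hc := ih f σ hs
    simp only [Fm.map, csubst] at hc ⊢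
    exact ((hv.norC _ _ (closed_csubst_sig _ _) (closed_csubst_sig _ _)).mp hc).1
  | negOrE2 h ih =>
    intro f σ hs
    have hc := ih f σ hs
    simp only [Fm.map, csubst] at hc ⊢
    exact ((hv.norC _ _ (closed_csubst_sig _ _) (closed_csubst_sig _ _)).mp hc).2
  | dnI h ih =>
    intro f σ hs
    simp only [Fm.map, csubst]
    rw [hv.dnC _ (closed_csubst_sig _ _)]
    exact ih f σ hs
  | dnE h ih =>
    intro f σ hs
    have hc := ih f σ hs
    simp only [Fm.map, csubst] at hc
    rwa [hv.dnC _ (closed_csubst_sig _ _)] at hc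
  | expO h1 h2 h3 ih1 ih2 ih3 =>
    intro f σ hs
    have hc1 := ih1 f σ hs
    have hc2 := ih2 f σ hs
    have hc3 := ih3 f σ hs
    simp only [Fm.map, csubst] at hc1 hc3
    have := (hv.clC _ (closed_csubst_sig _ _) hc1).mp hc2
    rw [hc3] at this
    cases this
  | @pemO Γ' A' h ih =>
    intro f σ hs
    have hc1 := ih f σ hs
    simp only [Fm.map, csubst] at hc1 ⊢
    rw [hv.orC _ _ (closed_csubst_sig _ _) (closed_neg (closed_csubst_sig _ _))]
    by_cases hA : v (csubst (sig σ) (Fm.map f A')) = true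
    · exact Or.inl hA
    · right
      have hiff := hv.clC _ (closed_csubst_sig _ _) hc1
      cases hneg : v (.neg (csubst (sig σ) (Fm.map f A'))) with
      | false => exact absurd (hiff.mpr hneg) hA
      | true => rfl
  | consR h1 h2 ih1 ih2 =>
    intro f σ hs
    have hc1 := ih1 f σ hs
    have hc2 := ih2 f σ hs
    simp only [Fm.map, csubst] at hc1 hc2
    have := (hv.compC _ (closed_csubst_sig _ _)).mp hc1
    rw [hc2] at this
    cases this
  | @compR Γ' A' =>
    intro f σ hs
    simp only [Fm.map, csubst]
    rw [hv.orC _ _ (closed_cl (closed_csubst_sig _ _)) (closed_ncl (closed_csubst_sig _ _))]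
    by_cases hcl : v (.cl (csubst (sig σ) (Fm.map f A'))) = true
    · exact Or.inl hcl
    · right
      cases hncl : v (.ncl (csubst (sig σ) (Fm.map f A'))) with
      | false => exact absurd ((hv.compC _ (closed_csubst_sig _ _)).mpr hncl) hcl
      | true => rfl
  | @allI Γ' B x c A h hcA hcB hcΓ ih =>
    intro f σ hs
    simp only [Fm.map, csubst]
    rw [hv.orC _ _ (closed_csubst_sig _ _) (closed_all_qN σ x (Fm.map f A))]
    by_cases hB : v (csubst (sig σ) (Fm.map f B)) = true
    · exact Or.inl hB
    · right
      rw [hv.allC x _ (fv_qN σ x (Fm.map f A))]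
      intro d
      rw [inst_qN]
      have ihd := ih (Function.update f c (.inr d)) σ ?_
      · have e1 : Fm.map (Function.update f c (.inr d)) B = Fm.map f B :=
          map_update_eq f c (.inr d) B hcB
        have e2 : Fm.map (Function.update f c (.inr d)) (subst x (.inr c) A)
            = subst x (.inr (.inr d)) (Fm.map f A) := by
          rw [map_subst_const, map_update_eq f c (.inr d) A hcA, Function.update_self]
        simp only [Fm.map, csubst] at ihd
        rw [e1, e2, csubst_subst_const] at ihd
        rcases (hv.orC _ _ (closed_csubst_sig _ _) (closed_csubst_update_sig _ _ _ _)).mp ihd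
          with hx | hx
        · exact absurd hx hB
        · exact hx
      · intro G hG
        rw [map_update_eq f c (.inr d) G (hcΓ G hG)]
        exact hs G hG
  | @allE Γ' x A c h ih =>
    intro f σ hs
    have hall := ih f σ hs
    simp only [Fm.map, csubst] at hall
    rw [hv.allC x _ (fv_qN σ x (Fm.map f A))] at hall
    have hgoal : csubst (sig σ) (Fm.map f (subst x (.inr c) A))
        = subst x (.inr (f c)) (csubst (Function.update (sig σ) x (.inl x)) (Fm.map f A)) := by
      rw [map_subst_const, csubst_subst_const, inst_qN]
    rw [hgoal, conv_den hv x _ (fv_qN σ x (Fm.map f A)) (f c)]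
    exact hall (den S (f c))
  | @exI Γ' x c A h ih =>
    intro f σ hs
    have hc := ih f σ hs
    have hgoal : csubst (sig σ) (Fm.map f (subst x (.inr c) A))
        = subst x (.inr (f c)) (csubst (Function.update (sig σ) x (.inl x)) (Fm.map f A)) := by
      rw [map_subst_const, csubst_subst_const, inst_qN]
    rw [hgoal, conv_den hv x _ (fv_qN σ x (Fm.map f A)) (f c)] at hc
    simp only [Fm.map, csubst]
    rw [hv.exC x _ (fv_qN σ x (Fm.map f A))]
    exact ⟨den S (f c), hc⟩
  | @exE Γ' x A c CC h h1 hcA hcC hcΓ ih ih1 =>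
    intro f σ hs
    have hex := ih f σ hs
    simp only [Fm.map, csubst] at hex
    rw [hv.exC x _ (fv_qN σ x (Fm.map f A))] at hex
    obtain ⟨d, hd⟩ := hex
    have ihd := ih1 (Function.update f c (.inr d)) σ ?_
    · rwa [map_update_eq f c (.inr d) CC hcC] at ihd
    · intro G hG
      rcases Set.mem_insert_iff.mp hG with rfl | hG'
      · have e2 : Fm.map (Function.update f c (.inr d)) (subst x (.inr c) A)
            = subst x (.inr (.inr d)) (Fm.map f A) := by
          rw [map_subst_const, map_update_eq f c (.inr d) A hcA, Function.update_self]
        rw [e2, csubst_subst_const, ← inst_qN]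
        exact hd
      · rw [map_update_eq f c (.inr d) G (hcΓ G hG')]
        exact hs G hG'
  | @negAllI Γ' x c A h ih =>
    intro f σ hs
    have hc := ih f σ hs
    simp only [Fm.map, csubst] at hc ⊢
    have hgoal : csubst (sig σ) (Fm.map f (subst x (.inr c) A))
        = subst x (.inr (f c)) (csubst (Function.update (sig σ) x (.inl x)) (Fm.map f A)) := by
      rw [map_subst_const, csubst_subst_const, inst_qN]
    rw [hgoal, conv_den_neg hv x _ (fv_qN σ x (Fm.map f A)) (f c)] at hc
    rw [hv.nallC x _ (fv_qN σ x (Fm.map f A))]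
    exact ⟨den S (f c), hc⟩
  | @negAllE Γ' x A CC c h h1 hcA hcC hcΓ ih ih1 =>
    intro f σ hs
    have hn := ih f σ hs
    simp only [Fm.map, csubst] at hn
    rw [hv.nallC x _ (fv_qN σ x (Fm.map f A))] at hn
    obtain ⟨d, hd⟩ := hn
    have ihd := ih1 (Function.update f c (.inr d)) σ ?_
    · rwa [map_update_eq f c (.inr d) CC hcC] at ihd
    · intro G hG
      rcases Set.mem_insert_iff.mp hG with rfl | hG'
      · have e2 : Fm.map (Function.update f c (.inr d)) (subst x (.inr c) A)
            = subst x (.inr (.inr d)) (Fm.map f A) := by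
          rw [map_subst_const, map_update_eq f c (.inr d) A hcA, Function.update_self]
        simp only [Fm.map, csubst]
        rw [e2, csubst_subst_const, ← inst_qN]
        exact hd
      · rw [map_update_eq f c (.inr d) G (hcΓ G hG')]
        exact hs G hG'
  | @negExI Γ' x c A h hcA hcΓ ih =>
    intro f σ hs
    simp only [Fm.map, csubst]
    rw [hv.nexC x _ (fv_qN σ x (Fm.map f A))]
    intro d
    have ihd := ih (Function.update f c (.inr d)) σ ?_
    · have e2 : Fm.map (Function.update f c (.inr d)) (subst x (.inr c) A)
          = subst x (.inr (.inr d)) (Fm.map f A) := by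
        rw [map_subst_const, map_update_eq f c (.inr d) A hcA, Function.update_self]
      simp only [Fm.map, csubst] at ihd
      rw [e2, csubst_subst_const, ← inst_qN] at ihd
      exact ihd
    · intro G hG
      rw [map_update_eq f c (.inr d) G (hcΓ G hG)]
      exact hs G hG
  | @negExE Γ' x A c h ih =>
    intro f σ hs
    have hn := ih f σ hs
    simp only [Fm.map, csubst] at hn ⊢
    rw [hv.nexC x _ (fv_qN σ x (Fm.map f A))] at hn
    have hgoal : csubst (sig σ) (Fm.map f (subst x (.inr c) A))
        = subst x (.inr (f c)) (csubst (Function.update (sig σ) x (.inl x)) (Fm.map f A)) := by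
      rw [map_subst_const, csubst_subst_const, inst_qN]
    rw [hgoal, conv_den_neg hv x _ (fv_qN σ x (Fm.map f A)) (f c)]
    exact hn (den S (f c))
  | @eqI Γ' c =>
    intro f σ hs
    show v (.eq (.inr (f c)) (.inr (f c))) = true
    exact (hv.eqP _ _).mpr rfl
  | @eqE Γ' c₁ c₂ x A h1 h2 ih1 ih2 =>
    intro f σ hs
    have he := ih1 f σ hs
    have hd : den S (f c₁) = den S (f c₂) := by
      have he' : v (.eq (.inr (f c₁)) (.inr (f c₂))) = true := he
      exact (hv.eqP _ _).mp he'
    have hi := ih2 f σ hs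
    have hg1 : csubst (sig σ) (Fm.map f (subst x (.inr c₁) A))
        = subst x (.inr (f c₁)) (csubst (Function.update (sig σ) x (.inl x)) (Fm.map f A)) := by
      rw [map_subst_const, csubst_subst_const, inst_qN]
    have hg2 : csubst (sig σ) (Fm.map f (subst x (.inr c₂) A))
        = subst x (.inr (f c₂)) (csubst (Function.update (sig σ) x (.inl x)) (Fm.map f A)) := by
      rw [map_subst_const, csubst_subst_const, inst_qN]
    rw [hg1] at hi
    rw [hg2, ← subst_invariance hv x (f c₁) (f c₂) hd _ _ (Nat.lt_succ_self _)
      (fv_qN σ x (Fm.map f A))]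
    exact hi
  | @av Γ' A0 A1 h ha ih =>
    intro f σ hs
    have hval := hv.avC _ _ (closed_csubst_sig σ (Fm.map f A0))
      (alpha_csubst (Alpha.map f ha) (sig σ) (std_sig σ))
    rw [← hval]
    exact ih f σ hs
lemma csubst_of_closed {M : Fm K} (σ : ℕ → ℕ ⊕ K) (h : Closed M) : csubst σ M = M := by
  rw [csubst_congr M σ Sum.inl
    (fun w hw => absurd hw (by rw [show fv M = ∅ from h]; exact Set.notMem_empty w)),
    csubst_id]

lemma closed_map {C : Type} (f : C → C ⊕ D) {M : Fm C} (h : Closed M) :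
    Closed (Fm.map f M) := by
  rw [Closed, fv_map]
  exact h

/-- Soundness of QLET_F: derivability implies semantic consequence. -/
theorem soundness {C : Type} (Γ : Set (Fm C)) (A : Fm C)
    (hΓ : ∀ B ∈ Γ, Closed B) (hA : Closed A) (h : Deriv Γ A) :
    SemCons Γ A := by
  intro D S v hne hv hsat
  obtain ⟨d₀⟩ := hne
  have key := main_sound hv h Sum.inl (fun _ => .inr d₀) ?_
  · rwa [csubst_of_closed _ (closed_map Sum.inl hA)] at key
  · intro G hG
    rw [csubst_of_closed _ (closed_map Sum.inl (hΓ G hG))]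
    exact hsat G hG

end S5
end

section
/- Compactness for QLET_F: (1) Γ ⊨ A if and only if there is a finite subset Γ₀ ⊆ Γ with Γ₀ ⊨ A; (2) Γ has a model if and only if every finite subset of Γ has a model. -/
set_option autoImplicit true
set_option relaxedAutoImplicit true

/-!
Compactness is proved semantically, by ultraproducts. Choose a model of each finite `s ⊆ Γ`
and take their ultraproduct along an ultrafilter on the finite subsets of `Γ` refining `atTop`.
A valuation is an arbitrary Boolean function constrained by clauses, and the ultralimit of the
factor valuations satisfies each clause because every factor does; for the quantifier clauses
this uses that `∀ᶠ i, ∃ e, P i e` is witnessed by a single element of the ultraproduct (Łoś).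
A sentence holds in the ultraproduct iff it holds in almost every factor, so every member of `Γ`
holds there, while a sentence failing in every factor still fails.
-/

namespace QLETF

section Renaming

variable {K K' K'' : Type} (f : K → K')

theorem Fm.map_subst (x : ℕ) (t : ℕ ⊕ K) (A : Fm K) :
    (subst x t A).map f = subst x (Sum.map id f t) (A.map f) := by
  have hT (a : ℕ ⊕ K) :
      Sum.map id f (substT x t a) = substT x (Sum.map id f t) (Sum.map id f a) := by
    rcases a with y | c
    · by_cases h : y = x <;> simp [substT, h]
    · rfl
  induction A with
  | pred n ts => simp [subst, Fm.map, hT]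
  | eq a b => simp [subst, Fm.map, hT]
  | all y A ih | ex y A ih => by_cases h : y = x <;> simp [subst, Fm.map, h, ih]
  | _ => simp [subst, Fm.map, *]

theorem Fm.map_pred_inr (n : ℕ) (cs : List K) :
    (Fm.pred n (cs.map Sum.inr)).map f = .pred n ((cs.map f).map Sum.inr) := by
  simp [Fm.map]

theorem Fm.map_map (g : K' → K'') (A : Fm K) : (A.map f).map g = A.map (g ∘ f) := by
  induction A <;> simp [Fm.map, *]

theorem Fm.fv_map (A : Fm K) : fv (A.map f) = fv A := by
  induction A with
  | pred n ts => ext y; simp [fv, Fm.map]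
  | eq a b => ext y; cases a <;> cases b <;> simp [fv, Fm.map]
  | _ => simp [fv, Fm.map, *]

theorem Fm.vars_map (A : Fm K) : vars (A.map f) = vars A := by
  induction A with
  | pred n ts => ext y; simp [vars, Fm.map]
  | eq a b => ext y; cases a <;> cases b <;> simp [vars, Fm.map]
  | _ => simp [vars, Fm.map, *]

theorem Closed.map {A : Fm K} (h : Closed A) : Closed (A.map f) := by
  rwa [Closed, Fm.fv_map]

theorem Alpha.map {A B : Fm K} (h : Alpha A B) : Alpha (A.map f) (B.map f) := by
  induction h with
  | refl A => exact .refl _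
  | symm _ ih => exact ih.symm
  | trans _ _ ih₁ ih₂ => exact ih₁.trans ih₂
  | negC _ ih => exact ih.negC
  | conjC _ _ ih₁ ih₂ => exact ih₁.conjC ih₂
  | disjC _ _ ih₁ ih₂ => exact ih₁.disjC ih₂
  | clC _ ih => exact ih.clC
  | nclC _ ih => exact ih.nclC
  | allC _ ih => exact ih.allC
  | exC _ ih => exact ih.exC
  | allR x y A hy =>
    simpa [Fm.map, Fm.map_subst] using Alpha.allR x y (A.map f) (by rwa [Fm.vars_map])
  | exR x y A hy =>
    simpa [Fm.map, Fm.map_subst] using Alpha.exR x y (A.map f) (by rwa [Fm.vars_map])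

end Renaming

section Ultraproduct

open Filter

variable {C ι : Type} {U : Ultrafilter ι} {D : ι → Type}

/-- `Filter.Product`, unfolded so that `Quotient.out` and the `Quotient` API apply directly. -/
abbrev Ultraproduct (U : Ultrafilter ι) (D : ι → Type) : Type :=
  Quotient (productSetoid (U : Filter ι) D)

theorem eventually_out_mk (x : ∀ i, D i) :
    ∀ᶠ i in (U : Filter ι), (Quotient.mk (productSetoid (U : Filter ι) D) x).out i = x i :=
  Quotient.exact (Quotient.out_eq (Quotient.mk (productSetoid (U : Filter ι) D) x))

theorem eventually_exists_iff_exists_out (hD : ∀ i, Nonempty (D i)) {P : ∀ i, D i → Prop} :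
    (∀ᶠ i in (U : Filter ι), ∃ e, P i e) ↔
      ∃ d : Ultraproduct U D, ∀ᶠ i in (U : Filter ι), P i (d.out i) := by
  refine ⟨fun h => ?_, fun ⟨d, hd⟩ => hd.mono fun i hi => ⟨_, hi⟩⟩
  let witness : ∀ i, D i := fun i => @Classical.epsilon _ (hD i) (P i)
  refine ⟨Quotient.mk _ witness, (h.and (eventually_out_mk witness)).mono ?_⟩
  rintro i ⟨hex, hout⟩
  rw [hout]
  exact Classical.epsilon_spec hex

theorem eventually_forall_iff_forall_out (hD : ∀ i, Nonempty (D i)) {P : ∀ i, D i → Prop} :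
    (∀ᶠ i in (U : Filter ι), ∀ e, P i e) ↔
      ∀ d : Ultraproduct U D, ∀ᶠ i in (U : Filter ι), P i (d.out i) := by
  rw [← not_iff_not]
  simpa only [← Ultrafilter.eventually_not, not_forall] using
    eventually_exists_iff_exists_out hD (P := fun i e => ¬ P i e)

/-- Reads a diagram constant of the ultraproduct in the `i`-th factor, through the chosen
representative; any two representatives agree on a `U`-large set of indices. -/
noncomputable def projConst (U : Ultrafilter ι) (i : ι) : C ⊕ Ultraproduct U D → C ⊕ D i :=
  Sum.map id fun d => d.out i

noncomputable def prodStruc (U : Ultrafilter ι) (S : ∀ i, Struc C (D i)) :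
    Struc C (Ultraproduct U D) where
  cI c := Quotient.mk _ fun i => (S i).cI c
  Pplus n ds := ∀ᶠ i in (U : Filter ι), (S i).Pplus n (ds.map fun d => d.out i)
  Pminus n ds := ∀ᶠ i in (U : Filter ι), (S i).Pminus n (ds.map fun d => d.out i)
  eqMinus a b := ∀ᶠ i in (U : Filter ι), (S i).eqMinus (a.out i) (b.out i)

open Classical in
noncomputable def prodVal (U : Ultrafilter ι) (v : ∀ i, Fm (C ⊕ D i) → Bool)
    (F : Fm (C ⊕ Ultraproduct U D)) : Bool :=
  decide (∀ᶠ i in (U : Filter ι), v i (F.map (projConst U i)) = true)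

variable {S : ∀ i, Struc C (D i)} {v : ∀ i, Fm (C ⊕ D i) → Bool}

theorem den_prodStruc (c : C ⊕ Ultraproduct U D) :
    den (prodStruc U S) c = Quotient.mk _ fun i => den (S i) (projConst U i c) := by
  rcases c with c | d
  · rfl
  · exact (Quotient.out_eq d).symm

variable (S) in
theorem eventually_out_den (c : C ⊕ Ultraproduct U D) :
    ∀ᶠ i in (U : Filter ι), (den (prodStruc U S) c).out i = den (S i) (projConst U i c) := by
  rw [den_prodStruc]
  exact eventually_out_mk _

variable (S) in
theorem eventually_map_den (cs : List (C ⊕ Ultraproduct U D)) :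
    ∀ᶠ i in (U : Filter ι), (cs.map (den (prodStruc U S))).map (fun d => d.out i) =
      (cs.map (projConst U i)).map (den (S i)) := by
  refine ((eventually_all_finite cs.finite_toSet).2 fun c _ => eventually_out_den S c).mono ?_
  intro i hi
  simp only [List.map_map]
  exact List.map_congr_left hi

theorem map_projConst_subst (i : ι) (x : ℕ) (c : C ⊕ Ultraproduct U D)
    (A : Fm (C ⊕ Ultraproduct U D)) :
    (subst x (Sum.inr c) A).map (projConst U i) =
      subst x (Sum.inr (projConst U i c)) (A.map (projConst U i)) :=
  Fm.map_subst _ _ _ _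

theorem prodVal_eq_iff {F : Fm (C ⊕ Ultraproduct U D)} {b : Bool} :
    prodVal U v F = b ↔ ∀ᶠ i in (U : Filter ι), v i (F.map (projConst U i)) = b := by
  cases b <;> simp [prodVal]

theorem prodVal_eq_prodVal_iff {F G : Fm (C ⊕ Ultraproduct U D)} :
    prodVal U v F = prodVal U v G ↔
      ∀ᶠ i in (U : Filter ι), v i (F.map (projConst U i)) = v i (G.map (projConst U i)) := by
  refine ⟨fun h => ?_, fun h => prodVal_eq_iff.2 ?_⟩
  · exact ((prodVal_eq_iff.1 rfl).and (prodVal_eq_iff.1 h.symm)).mono fun i hi =>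
      hi.1.trans hi.2.symm
  · exact (h.and (prodVal_eq_iff.1 rfl)).mono fun i hi => hi.1.trans hi.2

theorem prodVal_congr {F G : Fm (C ⊕ Ultraproduct U D)}
    (h : ∀ i, v i (F.map (projConst U i)) = v i (G.map (projConst U i))) :
    prodVal U v F = prodVal U v G :=
  prodVal_eq_prodVal_iff.2 (.of_forall h)

theorem prodVal_iff_forall (hD : ∀ i, Nonempty (D i)) {F : Fm (C ⊕ Ultraproduct U D)}
    {Φ : ∀ i, D i → Fm (C ⊕ D i)} {Ψ : Ultraproduct U D → Fm (C ⊕ Ultraproduct U D)}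
    (hΨ : ∀ d i, (Ψ d).map (projConst U i) = Φ i (d.out i))
    (h : ∀ i, v i (F.map (projConst U i)) = true ↔ ∀ e, v i (Φ i e) = true) :
    prodVal U v F = true ↔ ∀ d, prodVal U v (Ψ d) = true := by
  simp only [prodVal_eq_iff, hΨ, h]
  exact eventually_forall_iff_forall_out hD

theorem prodVal_iff_exists (hD : ∀ i, Nonempty (D i)) {F : Fm (C ⊕ Ultraproduct U D)}
    {Φ : ∀ i, D i → Fm (C ⊕ D i)} {Ψ : Ultraproduct U D → Fm (C ⊕ Ultraproduct U D)}
    (hΨ : ∀ d i, (Ψ d).map (projConst U i) = Φ i (d.out i))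
    (h : ∀ i, v i (F.map (projConst U i)) = true ↔ ∃ e, v i (Φ i e) = true) :
    prodVal U v F = true ↔ ∃ d, prodVal U v (Ψ d) = true := by
  simp only [prodVal_eq_iff, hΨ, h]
  exact eventually_exists_iff_exists_out hD

theorem valCore_prodVal (hD : ∀ i, Nonempty (D i)) (hv : ∀ i, ValCore (S i) (v i)) :
    ValCore (prodStruc U S) (prodVal U v) where
  atom n cs := by
    rw [prodVal_eq_iff]
    refine eventually_congr ((eventually_map_den S cs).mono fun i hi => ?_)
    rw [Fm.map_pred_inr, (hv i).atom, hi]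
  natom n cs := by
    rw [prodVal_eq_iff]
    refine eventually_congr ((eventually_map_den S cs).mono fun i hi => ?_)
    rw [Fm.map, Fm.map_pred_inr, (hv i).natom, hi]
  eqP a b := by
    rw [prodVal_eq_iff, den_prodStruc, den_prodStruc, Quotient.eq]
    exact eventually_congr (.of_forall fun i => (hv i).eqP _ _)
  eqN a b := by
    rw [prodVal_eq_iff]
    refine eventually_congr (((eventually_out_den S a).and (eventually_out_den S b)).mono ?_)
    rintro i ⟨ha, hb⟩
    rw [ha, hb]
    exact (hv i).eqN _ _
  andC A B hA hB := by
    simp only [prodVal_eq_iff, ← eventually_and]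
    exact eventually_congr (.of_forall fun i => (hv i).andC _ _ (hA.map _) (hB.map _))
  orC A B hA hB := by
    simp only [prodVal_eq_iff, ← Ultrafilter.eventually_or]
    exact eventually_congr (.of_forall fun i => (hv i).orC _ _ (hA.map _) (hB.map _))
  nandC A B hA hB := by
    simp only [prodVal_eq_iff, ← Ultrafilter.eventually_or]
    exact eventually_congr (.of_forall fun i => (hv i).nandC _ _ (hA.map _) (hB.map _))
  norC A B hA hB := by
    simp only [prodVal_eq_iff, ← eventually_and]
    exact eventually_congr (.of_forall fun i => (hv i).norC _ _ (hA.map _) (hB.map _))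
  dnC A hA := prodVal_congr fun i => (hv i).dnC _ (hA.map _)
  allC x A hA := prodVal_iff_forall hD (fun d i => map_projConst_subst i x _ A)
    fun i => (hv i).allC x _ (by rwa [Fm.fv_map])
  exC x A hA := prodVal_iff_exists hD (fun d i => map_projConst_subst i x _ A)
    fun i => (hv i).exC x _ (by rwa [Fm.fv_map])
  nallC x A hA := prodVal_iff_exists hD
    (Φ := fun i e => .neg (subst x (Sum.inr (Sum.inr e)) (A.map (projConst U i))))
    (fun d i => congrArg Fm.neg (map_projConst_subst i x _ A))
    fun i => (hv i).nallC x _ (by rwa [Fm.fv_map])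
  nexC x A hA := prodVal_iff_forall hD
    (Φ := fun i e => .neg (subst x (Sum.inr (Sum.inr e)) (A.map (projConst U i))))
    (fun d i => congrArg Fm.neg (map_projConst_subst i x _ A))
    fun i => (hv i).nexC x _ (by rwa [Fm.fv_map])

theorem isVal_prodVal (hD : ∀ i, Nonempty (D i)) (hv : ∀ i, IsVal (S i) (v i)) :
    IsVal (prodStruc U S) (prodVal U v) where
  toValCore := valCore_prodVal hD fun i => (hv i).toValCore
  clC A hA hcl := by
    simp only [prodVal_eq_iff] at hcl ⊢
    exact eventually_congr (hcl.mono fun i h => (hv i).clC _ (hA.map _) h)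
  compC A hA := by
    simp only [prodVal_eq_iff]
    exact eventually_congr (.of_forall fun i => (hv i).compC _ (hA.map _))
  avC A A' hA hAA' := prodVal_congr fun i => (hv i).avC _ _ (hA.map _) (hAA'.map _)
  substC x A hA c₁ c₂ hden hval := by
    rw [den_prodStruc, den_prodStruc, Quotient.eq] at hden
    rw [prodVal_eq_prodVal_iff] at hval
    have h := (hden.and hval).mono fun i hi => (hv i).substC x _ (by rwa [Fm.fv_map]) _ _ hi.1
      (by simpa only [map_projConst_subst] using hi.2)
    refine ⟨?_, ?_, ?_⟩ <;> refine prodVal_eq_prodVal_iff.2 (h.mono fun i hi => ?_) <;>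
      simp only [Fm.map, map_projConst_subst, hi]

theorem sat_prodVal_iff (B : Fm C) :
    Sat (prodStruc U S) (prodVal U v) B ↔ ∀ᶠ i in (U : Filter ι), Sat (S i) (v i) B := by
  simp only [Sat, prodVal_eq_iff, Fm.map_map]
  rfl

end Ultraproduct

variable {C : Type} {Γ₀ Γ : Set (Fm C)}

theorem SemCons.mono {A : Fm C} (h : Γ₀ ⊆ Γ) (h₀ : SemCons Γ₀ A) : SemCons Γ A :=
  fun D S v hD hv hΓ => h₀ D S v hD hv fun B hB => hΓ B (h hB)

theorem HasModel.mono (h : Γ₀ ⊆ Γ) : HasModel Γ → HasModel Γ₀ :=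
  fun ⟨D, S, v, hD, hv, hΓ⟩ => ⟨D, S, v, hD, hv, fun B hB => hΓ B (h hB)⟩

theorem exists_model_of_finset_models {D : Finset Γ → Type} (S : ∀ s, Struc C (D s))
    (v : ∀ s, Fm (C ⊕ D s) → Bool) (hD : ∀ s, Nonempty (D s)) (hv : ∀ s, IsVal (S s) (v s))
    (hsat : ∀ s : Finset Γ, ∀ B ∈ s, Sat (S s) (v s) (B : Fm C)) :
    ∃ (D' : Type) (S' : Struc C D') (v' : Fm (C ⊕ D') → Bool), Nonempty D' ∧ IsVal S' v' ∧
      (∀ B ∈ Γ, Sat S' v' B) ∧ ∀ B, Sat S' v' B → ∃ s, Sat (S s) (v s) B := by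
  let U : Ultrafilter (Finset Γ) := .of Filter.atTop
  refine ⟨Ultraproduct U D, prodStruc U S, prodVal U v, ⟨Quotient.mk _ fun s => (hD s).some⟩,
    isVal_prodVal hD hv, fun B hB => ?_, fun B hB => ((sat_prodVal_iff B).1 hB).exists⟩
  rw [sat_prodVal_iff]
  exact Ultrafilter.of_le _ ((Filter.eventually_ge_atTop {⟨B, hB⟩}).mono fun s hs =>
    hsat s _ (hs (Finset.mem_singleton_self _)))

end QLETF

namespace S12
open QLETF

theorem compactness_general {C : Type} (Γ : Set (Fm C)) (A : Fm C) :
    (SemCons Γ A ↔ ∃ Γ₀ ⊆ Γ, Γ₀.Finite ∧ SemCons Γ₀ A) ∧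
    (HasModel Γ ↔ ∀ Γ₀ ⊆ Γ, Γ₀.Finite → HasModel Γ₀) := by
  refine ⟨⟨fun h => ?_, fun ⟨Γ₀, hsub, _, h₀⟩ => h₀.mono hsub⟩,
    ⟨fun h Γ₀ hsub _ => h.mono hsub, fun h => ?_⟩⟩
  · by_contra! hfin
    have hcounter (s : Finset Γ) : ∃ (D : Type) (S : Struc C D) (v : Fm (C ⊕ D) → Bool),
        Nonempty D ∧ IsVal S v ∧ (∀ B ∈ s, Sat S v (B : Fm C)) ∧ ¬ Sat S v A := by
      have h₀ := hfin (Subtype.val '' (s : Set Γ)) (by simp) (s.finite_toSet.image _)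
      simp only [SemCons, not_forall, exists_prop] at h₀
      obtain ⟨D, S, v, hD, hv, hsat, hA⟩ := h₀
      exact ⟨D, S, v, hD, hv, fun B hB => hsat B ⟨B, hB, rfl⟩, hA⟩
    choose D S v hD hv hsat hA using hcounter
    obtain ⟨D', S', v', hD', hv', hΓ, hsat'⟩ := exists_model_of_finset_models S v hD hv hsat
    obtain ⟨s, hs⟩ := hsat' A (h D' S' v' hD' hv' hΓ)
    exact hA s hs
  · have hmodel (s : Finset Γ) : HasModel (Subtype.val '' (s : Set Γ)) :=
      h _ (by simp) (s.finite_toSet.image _)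
    choose D S v hD hv hsat using hmodel
    obtain ⟨D', S', v', hD', hv', hΓ, -⟩ :=
      exists_model_of_finset_models S v hD hv fun s B hB => hsat s B ⟨B, hB, rfl⟩
    exact ⟨D', S', v', hD', hv', hΓ⟩

/-- Compactness for QLET_F. -/
theorem compactness {C : Type} [Infinite C] (Γ : Set (Fm C)) (A : Fm C)
    (hΓ : ∀ B ∈ Γ, Closed B) (hA : Closed A) :
    (SemCons Γ A ↔ ∃ Γ₀ ⊆ Γ, Γ₀.Finite ∧ SemCons Γ₀ A) ∧
    (HasModel Γ ↔ ∀ Γ₀ ⊆ Γ, Γ₀.Finite → HasModel Γ₀) :=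
  compactness_general Γ A

end S12
end
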